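/- arXiv:1604.05343 — 6 statements merged into one kernel-verified Lean document; each statement's English description precedes it below -/
import Mathlib

section
/- Let m1, m2 be nonnegative integers, let ū be a tuple of m1 complex numbers, v̄ a tuple of m2 complex numbers, and w̄ a tuple of m1+m2 pairwise distinct complex numbers, all parameters generic so that every denominator below is nonzero. Then the sum over all partitions of w̄ into disjoint subsets w̄_α of cardinality m1 and w̄_ᾱ of cardinality m2 satisfies: Σ g(w̄_α,ū)·g(w̄_ᾱ,v̄)·g(w̄_ᾱ,w̄_α) = g(w̄,ū)·g(w̄,v̄)/g(ū,v̄). -/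
open scoped BigOperators

/-- The rational function `g(x,y) = c/(x-y)`. -/
noncomputable def gG (c x y : ℂ) : ℂ := c / (x - y)

/-- The rational function `f(x,y) = (x-y+c)/(x-y)`. -/
noncomputable def fF (c x y : ℂ) : ℂ := (x - y + c) / (x - y)

/-- The rational function `h(x,y) = (x-y+c)/c`. -/
noncomputable def hH (c x y : ℂ) : ℂ := (x - y + c) / c

/-- A two-argument function applied to tuples denotes the product over all elements. -/
noncomputable def pF (F : ℂ → ℂ → ℂ) (U V : List ℂ) : ℂ :=
  (U.map fun x => (V.map fun y => F x y).prod).prod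

/-- The domain-wall partition function `K(ū|v̄) = Δ'(ū)·Δ(v̄)·h(ū,v̄)·det(g(u_j,v_k)/h(u_j,v_k))`,
written in the equivalent (rational-continuation) form in which the prefactor `h(ū,v̄)` is
distributed over the rows of the determinant:
`K(ū|v̄) = Δ'(ū)·Δ(v̄)·det( g(u_j,v_k)·∏_{k'≠k} h(u_j,v_{k'}) )`.
For tuples of equal length `n` with all denominators nonzero this coincides with the literal
formula, and `K(∅|∅) = 1`. -/
noncomputable def Kd (c : ℂ) (U V : List ℂ) : ℂ :=
  (∏ j : Fin U.length, ∏ k : Fin U.length,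
      if (j : ℕ) < (k : ℕ) then gG c (U.get j) (U.get k) else 1) *
  (∏ j : Fin V.length, ∏ k : Fin V.length,
      if (k : ℕ) < (j : ℕ) then gG c (V.get j) (V.get k) else 1) *
  Matrix.det (Matrix.of fun j k : Fin U.length =>
    gG c (U.get j) (V.getD (k : ℕ) 0) *
      ∏ k' : Fin U.length, if k' = k then 1 else hH c (U.get j) (V.getD (k' : ℕ) 0))

/-- The sub-tuple of a tuple `L` selected by a set `A` of positions (in increasing order). -/
noncomputable def subL (L : List ℂ) (A : Finset (Fin L.length)) : List ℂ :=
  (A.sort (· ≤ ·)).map L.get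

/-- Genericity of a family of parameters: all members are pairwise distinct and no difference
of two members equals `±c`, so that every denominator occurring (also after shifts by `±c`)
is nonzero. -/
def Generic (c : ℂ) (L : List ℂ) : Prop :=
  L.Pairwise fun x y => x ≠ y ∧ x - y ≠ c ∧ x - y ≠ -c

/-! Clearing the denominators of `g`, the identity becomes
`∑_A Δ(A,V) Δ(W∖A,U) / Δ(W∖A,A) = Δ(U,V)` with `Δ(B,A) = ∏_{b∈B, a∈A} (b - a)`, which holds for
all finite sets with `|W| = |U| + |V|`. It is proved by induction on `U`. For `U = insert u U₀`
both sides are polynomials in `u` of degree at most `|V|`. At `u = w ∈ W` every partition with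
`w ∉ A` contributes zero, and for the others the factor `∏_{b ∈ W∖A} (b - w)` cancels against
the denominator, leaving `∏_{v∈V} (w - v)` times the identity for `U₀` and `W ∖ {w}`.
As `|W| > |V|`, the two polynomials coincide. -/
open Finset Polynomial

section DiffProd

variable {K : Type*} [CommRing K]

def diffProd (B A : Finset K) : K := ∏ b ∈ B, ∏ a ∈ A, (b - a)

lemma diffProd_insert_left [DecidableEq K] {B : Finset K} {b : K} (hb : b ∉ B) (A : Finset K) :
    diffProd (insert b B) A = (∏ a ∈ A, (b - a)) * diffProd B A :=
  prod_insert hb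

lemma diffProd_insert_right [DecidableEq K] (B : Finset K) {A : Finset K} {a : K} (ha : a ∉ A) :
    diffProd B (insert a A) = (∏ b ∈ B, (b - a)) * diffProd B A := by
  simp only [diffProd, prod_insert ha, prod_mul_distrib]

lemma diffProd_sdiff_mul_diffProd [DecidableEq K] {A W : Finset K} (h : A ⊆ W) (U : Finset K) :
    diffProd (W \ A) U * diffProd A U = diffProd W U :=
  prod_sdiff h

lemma diffProd_ne_zero [IsDomain K] {B A : Finset K} (h : Disjoint B A) : diffProd B A ≠ 0 :=
  prod_ne_zero_iff.2 fun _ hb => prod_ne_zero_iff.2 fun _ ha =>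
    sub_ne_zero.2 (disjoint_left.1 h hb <| · ▸ ha)

end DiffProd

lemma natDegree_prod_C_sub_X_le {K : Type*} [CommRing K] (S : Finset K) :
    (∏ b ∈ S, (C b - X)).natDegree ≤ S.card := by
  refine (natDegree_prod_le _ _).trans ?_
  simpa using sum_le_card_nsmul S _ 1 fun b _ =>
    (natDegree_sub_le _ _).trans (by simp [natDegree_X_le])

lemma sum_powersetCard_succ_of_mem {α M : Type*} [DecidableEq α] [AddCommMonoid M]
    {W : Finset α} {w : α} (hw : w ∈ W) (k : ℕ) (F : Finset α → M)
    (hF : ∀ A ∈ W.powersetCard (k + 1), w ∉ A → F A = 0) :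
    ∑ A ∈ W.powersetCard (k + 1), F A = ∑ A ∈ (W.erase w).powersetCard k, F (insert w A) := by
  have hw' : w ∉ W.erase w := notMem_erase w W
  have hsplit : W.powersetCard (k + 1) =
      (W.erase w).powersetCard (k + 1) ∪ ((W.erase w).powersetCard k).image (insert w) := by
    conv_lhs => rw [← insert_erase hw]
    exact powersetCard_succ_insert hw' k
  have hnotMem {A : Finset α} {n : ℕ} (hA : A ∈ (W.erase w).powersetCard n) : w ∉ A :=
    fun h => hw' ((mem_powersetCard.1 hA).1 h)
  rw [hsplit, sum_union, sum_image, sum_eq_zero, zero_add]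
  · exact fun A hA => hF A (powersetCard_mono (erase_subset w W) hA) (hnotMem hA)
  · intro A hA B hB hAB
    rw [← erase_insert (hnotMem hA), ← erase_insert (hnotMem hB), hAB]
  · refine disjoint_left.2 fun A hA hA' => ?_
    obtain ⟨B, -, rfl⟩ := mem_image.1 hA'
    exact hnotMem hA (mem_insert_self w B)

section PartitionSum

variable {K : Type*} [Field K] [DecidableEq K]

def partitionTerm (U V W A : Finset K) : K :=
  diffProd A V * diffProd (W \ A) U / diffProd (W \ A) A

lemma partitionTerm_insert {U : Finset K} {u : K} (hu : u ∉ U) (V W A : Finset K) :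
    partitionTerm (insert u U) V W A = partitionTerm U V W A * ∏ b ∈ W \ A, (b - u) := by
  rw [partitionTerm, partitionTerm, diffProd_insert_right _ hu]
  ring

lemma sum_partitionTerm_mul_prod_sub_of_mem (U V : Finset K) {W : Finset K} {w : K} (hw : w ∈ W)
    (k : ℕ) :
    ∑ A ∈ W.powersetCard (k + 1), partitionTerm U V W A * ∏ b ∈ W \ A, (b - w) =
      (∏ v ∈ V, (w - v)) * ∑ A ∈ (W.erase w).powersetCard k, partitionTerm U V (W.erase w) A := by
  rw [sum_powersetCard_succ_of_mem hw, mul_sum]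
  · refine sum_congr rfl fun A hA => ?_
    have hwA : w ∉ A := fun h => notMem_erase w W ((mem_powersetCard.1 hA).1 h)
    have hsdiff : W \ insert w A = W.erase w \ A := by rw [sdiff_insert, erase_sdiff_comm]
    have hne : ∏ b ∈ W.erase w \ A, (b - w) ≠ 0 :=
      prod_ne_zero_iff.2 fun b hb => sub_ne_zero.2 (ne_of_mem_erase (mem_sdiff.1 hb).1)
    have hdisj : diffProd (W.erase w \ A) A ≠ 0 := diffProd_ne_zero sdiff_disjoint
    rw [partitionTerm, partitionTerm, hsdiff, diffProd_insert_left hwA,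
      diffProd_insert_right _ hwA]
    field_simp
  · intro A _ hwA
    exact mul_eq_zero_of_right _ (prod_eq_zero (mem_sdiff.2 ⟨hw, hwA⟩) (sub_self w))

theorem sum_partitionTerm (U V W : Finset K) (hW : W.card = U.card + V.card) :
    ∑ A ∈ W.powersetCard U.card, partitionTerm U V W A = diffProd U V := by
  induction U using Finset.induction_on generalizing W with
  | empty => simp [partitionTerm, diffProd]
  | insert u U hu ih =>
    rw [card_insert_of_notMem hu] at hW ⊢
    have hpoly : ∑ A ∈ W.powersetCard (U.card + 1),
        C (partitionTerm U V W A) * ∏ b ∈ W \ A, (C b - X) =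
          C (diffProd U V) * ∏ v ∈ V, (X - C v) := by
      refine eq_of_natDegree_lt_card_of_eval_eq' _ _ W (fun w hw => ?_) ?_
      · simp only [eval_finsetSum, eval_mul, eval_C, eval_prod, eval_sub, eval_X]
        rw [sum_partitionTerm_mul_prod_sub_of_mem U V hw,
          ih _ (by rw [card_erase_of_mem hw]; omega), mul_comm]
      · have hdeg : ∀ A ∈ W.powersetCard (U.card + 1),
            (C (partitionTerm U V W A) * ∏ b ∈ W \ A, (C b - X)).natDegree ≤ V.card := by
          intro A hA
          obtain ⟨hAW, hAcard⟩ := mem_powersetCard.1 hA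
          refine (natDegree_C_mul_le _ _).trans ((natDegree_prod_C_sub_X_le _).trans_eq ?_)
          rw [card_sdiff_of_subset hAW]
          omega
        refine max_lt ((natDegree_sum_le_of_forall_le _ _ hdeg).trans_lt ?_) ?_
        · omega
        · refine (natDegree_C_mul_le _ _).trans_lt ?_
          rw [natDegree_finsetProd_X_sub_C_eq_card]
          omega
    have := congrArg (eval u) hpoly
    simp only [eval_finsetSum, eval_mul, eval_C, eval_prod, eval_sub, eval_X] at this
    rw [diffProd_insert_left hu, mul_comm, ← this]
    exact sum_congr rfl fun A _ => partitionTerm_insert hu V W A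

end PartitionSum

section GProd

noncomputable def gProd (c : ℂ) (S T : Finset ℂ) : ℂ := ∏ s ∈ S, ∏ t ∈ T, gG c s t

lemma gProd_eq_div (c : ℂ) (S T : Finset ℂ) :
    gProd c S T = c ^ (S.card * T.card) / diffProd S T := by
  simp only [gProd, gG, diffProd, div_eq_mul_inv, prod_mul_distrib, prod_inv_distrib, prod_const,
    ← pow_mul']

theorem sum_powersetCard_gProd {c : ℂ} (hc : c ≠ 0) {U V W : Finset ℂ}
    (hW : W.card = U.card + V.card) (hWU : Disjoint W U) (hWV : Disjoint W V) :
    ∑ A ∈ W.powersetCard U.card, gProd c A U * gProd c (W \ A) V * gProd c (W \ A) A =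
      gProd c W U * gProd c W V / gProd c U V := by
  have hterm : ∀ A ∈ W.powersetCard U.card,
      gProd c A U * gProd c (W \ A) V * gProd c (W \ A) A =
        c ^ (U.card * U.card + V.card * V.card + V.card * U.card) /
          (diffProd W U * diffProd W V) * partitionTerm U V W A := by
    intro A hA
    obtain ⟨hAW, hAcard⟩ := mem_powersetCard.1 hA
    have hTcard : (W \ A).card = V.card := by rw [card_sdiff_of_subset hAW]; omega
    have hTU : diffProd (W \ A) U ≠ 0 := diffProd_ne_zero (hWU.mono_left sdiff_subset)
    have hAV : diffProd A V ≠ 0 := diffProd_ne_zero (hWV.mono_left hAW)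
    rw [gProd_eq_div, gProd_eq_div, gProd_eq_div, partitionTerm,
      ← diffProd_sdiff_mul_diffProd hAW U, ← diffProd_sdiff_mul_diffProd hAW V, hAcard, hTcard]
    field_simp
    ring
  rw [sum_congr rfl hterm, ← mul_sum, sum_partitionTerm U V W hW, gProd_eq_div, gProd_eq_div,
    gProd_eq_div, hW]
  field_simp
  ring

end GProd

lemma pF_eq_gProd (c : ℂ) {L M : List ℂ} (hL : L.Nodup) (hM : M.Nodup) :
    pF (gG c) L M = gProd c L.toFinset M.toFinset := by
  rw [pF, ← List.prod_toFinset _ hL]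
  exact prod_congr rfl fun x _ => (List.prod_toFinset _ hM).symm

lemma toFinset_subL (L : List ℂ) (A : Finset (Fin L.length)) :
    (subL L A).toFinset = A.image L.get := by
  ext; simp [subL]

lemma nodup_subL {L : List ℂ} (hL : L.Nodup) (A : Finset (Fin L.length)) : (subL L A).Nodup :=
  (sort_nodup A _).map (List.nodup_iff_injective_get.1 hL)

lemma sum_powersetCard_univ_image_get {α M : Type*} [DecidableEq α] [AddCommMonoid M]
    {L : List α} (hL : L.Nodup) (k : ℕ) (G : Finset α → M) :
    ∑ A ∈ (univ : Finset (Fin L.length)).powersetCard k, G (A.image L.get) =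
      ∑ S ∈ L.toFinset.powersetCard k, G S := by
  let e : Fin L.length ↪ α := ⟨L.get, List.nodup_iff_injective_get.1 hL⟩
  have he : L.toFinset = univ.map e := by rw [map_eq_image]; exact (Fin.univ_image_get L).symm
  rw [he, powersetCard_map, sum_map]
  exact sum_congr rfl fun A _ => by simp [e, map_eq_image]

/-- summation of Cauchy determinants, Lemma B.1:
`Σ g(w̄_α,ū)·g(w̄_ᾱ,v̄)·g(w̄_ᾱ,w̄_α) = g(w̄,ū)·g(w̄,v̄)/g(ū,v̄)`,
the sum running over all partitions of `w̄` into subsets of cardinalities `m1` and `m2`. -/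
theorem stmt0 (c : ℂ) (hc : c ≠ 0) (m1 m2 : ℕ) (U V W : List ℂ)
    (hU : U.length = m1) (hV : V.length = m2) (hW : W.length = m1 + m2)
    (hgen : (W ++ U ++ V).Pairwise (· ≠ ·)) :
    ∑ A ∈ Finset.powersetCard m1 (Finset.univ : Finset (Fin W.length)),
      pF (gG c) (subL W A) U * pF (gG c) (subL W Aᶜ) V * pF (gG c) (subL W Aᶜ) (subL W A)
      = pF (gG c) W U * pF (gG c) W V / pF (gG c) U V := by
  have hnd : (W ++ U ++ V).Nodup := hgen
  obtain ⟨⟨hWnd, hUnd, hWU⟩, hVnd, hWUV⟩ := by simpa only [List.nodup_append] using hnd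
  have hdisj {L M : List ℂ} (h : ∀ a ∈ L, ∀ b ∈ M, a ≠ b) : Disjoint L.toFinset M.toFinset :=
    disjoint_left.2 fun a ha hb => h a (List.mem_toFinset.1 ha) a (List.mem_toFinset.1 hb) rfl
  have hcompl (A : Finset (Fin W.length)) :
      (subL W Aᶜ).toFinset = W.toFinset \ (subL W A).toFinset := by
    rw [toFinset_subL, toFinset_subL, compl_eq_univ_sdiff,
      image_sdiff _ _ (List.nodup_iff_injective_get.1 hWnd), Fin.univ_image_get]
  let G (S : Finset ℂ) : ℂ := gProd c S U.toFinset * gProd c (W.toFinset \ S) V.toFinset *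
    gProd c (W.toFinset \ S) S
  calc _ = ∑ A ∈ (univ : Finset (Fin W.length)).powersetCard m1, G (A.image W.get) :=
        sum_congr rfl fun A _ => by
          simp only [G, pF_eq_gProd c (nodup_subL hWnd _) hUnd,
            pF_eq_gProd c (nodup_subL hWnd _) hVnd,
            pF_eq_gProd c (nodup_subL hWnd _) (nodup_subL hWnd _), hcompl, toFinset_subL]
    _ = ∑ S ∈ W.toFinset.powersetCard m1, G S := sum_powersetCard_univ_image_get hWnd m1 G
    _ = _ := by
      rw [pF_eq_gProd c hWnd hUnd, pF_eq_gProd c hWnd hVnd, pF_eq_gProd c hUnd hVnd,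
        ← hU, ← List.toFinset_card_of_nodup hUnd]
      refine sum_powersetCard_gProd hc ?_ (hdisj hWU)
        (hdisj fun a ha => hWUV a (List.mem_append_left _ ha))
      simp only [List.toFinset_card_of_nodup, hWnd, hUnd, hVnd, hU, hV, hW]
end

section
/- Let n ≥ 1 and let ū=(u_1,…,u_n), v̄=(v_1,…,v_n) be tuples of complex numbers with u_1,…,u_{n−1},v_1,…,v_n generic (pairwise distinct and all denominators below nonzero). Then the DWPF K(ū|v̄), viewed as a rational function of u_n, has a simple pole at u_n=v_n, and lim_{u_n→v_n} (u_n−v_n)·K(ū|v̄) = c·f(v_n,v̄_n)·f(ū_n,u_n)·K(ū_n|v̄_n), where ū_n=ū∖{u_n} and v̄_n=v̄∖{v_n}. Equivalently, K(ū|v̄) − g(u_n,v_n)·f(v_n,v̄_n)·f(ū_n,u_n)·K(ū_n|v̄_n) is regular at u_n=v_n. -/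
open scoped BigOperators

/-! Expanding the determinant along the row of `u_n` splits `K(ū|v̄)` into a part that is
regular at `u_n = v_n` and the corner term
`g(u_n,v_n)·h(u_n,v̄_n)·h(ū_n,v_n)·g(ū_n,u_n)·g(v_n,v̄_n)·K(ū_n|v̄_n)`: the cofactor of the corner
entry is the DWPF matrix of `ū_n, v̄_n` with its rows rescaled by `h(u_j,v_n)`. Multiplying by
`u_n - v_n` kills the regular part, and `g·h = f` gives the residue. The subtracted term
`g(u_n,v_n)·f(v_n,v̄_n)·f(ū_n,u_n)·K(ū_n|v̄_n)` differs from the corner term by `g(u_n,v_n)` times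
a function that is differentiable and vanishes at `u_n = v_n`, i.e. by `c` times a difference
quotient, which converges. -/

open Topology Filter

theorem Matrix.det_succ_row_last {R : Type*} [CommRing R] {m : ℕ}
    (A : Matrix (Fin (m + 1)) (Fin (m + 1)) R) :
    A.det = ∑ k : Fin m, (-1) ^ (m + (k : ℕ)) * A (Fin.last m) k.castSucc *
        (A.submatrix Fin.castSucc k.castSucc.succAbove).det
      + A (Fin.last m) (Fin.last m) * (A.submatrix Fin.castSucc Fin.castSucc).det := by
  rw [Matrix.det_succ_row A (Fin.last m), Fin.sum_univ_castSucc]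
  simp [Fin.succAbove_last, ← two_mul]

section Pole

variable {c : ℂ} {F D E Q : ℂ → ℂ} {y : ℂ}

lemma tendsto_sub_mul_of_eq_add_gG_mul (hF : ∀ x, F x = D x + gG c x y * E x)
    (hD : ContinuousAt D y) (hE : ContinuousAt E y) :
    Tendsto (fun x => (x - y) * F x) (𝓝[≠] y) (𝓝 (c * E y)) := by
  have hlim : ContinuousAt (fun x => (x - y) * D x + c * E x) y := by fun_prop
  have : Tendsto (fun x => (x - y) * D x + c * E x) (𝓝[≠] y) (𝓝 (c * E y)) := by
    simpa using hlim.tendsto.mono_left nhdsWithin_le_nhds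
  refine this.congr' ?_
  filter_upwards [self_mem_nhdsWithin] with x hx
  rw [hF, gG]
  field_simp [sub_ne_zero.2 hx]

lemma exists_tendsto_sub_gG_mul_of_eq_add_gG_mul (hF : ∀ x, F x = D x + gG c x y * E x)
    (hD : ContinuousAt D y) (hE : DifferentiableAt ℂ E y) (hQ : DifferentiableAt ℂ Q y)
    (hEQ : E y = Q y) :
    ∃ r, Tendsto (fun x => F x - gG c x y * Q x) (𝓝[≠] y) (𝓝 r) := by
  have hslope := hasDerivAt_iff_tendsto_slope.mp (hE.sub hQ).hasDerivAt
  refine ⟨_, ((hD.tendsto.mono_left nhdsWithin_le_nhds).add (hslope.const_mul c)).congr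
    fun x => ?_⟩
  simp only [hF, slope_def_field, Pi.sub_apply, hEQ, sub_self, sub_zero, gG]
  ring

end Pole

section Dwpf

variable (c : ℂ)

lemma fF_eq_gG_mul_hH (hc : c ≠ 0) (x y : ℂ) : fF c x y = gG c x y * hH c x y := by
  unfold fF gG hH
  rcases eq_or_ne (x - y) 0 with h | h
  · simp [h]
  · field_simp

noncomputable def deltaPrime {n : ℕ} (u : Fin n → ℂ) : ℂ :=
  ∏ j : Fin n, ∏ k : Fin n, if (j : ℕ) < (k : ℕ) then gG c (u j) (u k) else 1

noncomputable def delta {n : ℕ} (v : Fin n → ℂ) : ℂ :=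
  ∏ j : Fin n, ∏ k : Fin n, if (k : ℕ) < (j : ℕ) then gG c (v j) (v k) else 1

noncomputable def dwpfMatrix {ι : Type*} {n : ℕ} (u : ι → ℂ) (v : Fin n → ℂ) :
    Matrix ι (Fin n) ℂ :=
  Matrix.of fun j k => gG c (u j) (v k) * ∏ k' : Fin n, if k' = k then 1 else hH c (u j) (v k')

noncomputable def dwpf {n : ℕ} (u v : Fin n → ℂ) : ℂ :=
  deltaPrime c u * delta c v * (dwpfMatrix c u v).det

variable {c} {m : ℕ}

lemma deltaPrime_snoc (u : Fin m → ℂ) (x : ℂ) :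
    deltaPrime c (Fin.snoc u x : Fin (m + 1) → ℂ) = deltaPrime c u * ∏ j, gG c (u j) x := by
  simp [deltaPrime, Fin.prod_univ_castSucc, Finset.prod_mul_distrib, Fin.castSucc_lt_last,
    not_lt.2 (Fin.le_last _)]

lemma delta_snoc (v : Fin m → ℂ) (y : ℂ) :
    delta c (Fin.snoc v y : Fin (m + 1) → ℂ) = delta c v * ∏ k, gG c y (v k) := by
  simp [delta, Fin.prod_univ_castSucc, Fin.castSucc_lt_last, not_lt.2 (Fin.le_last _)]

lemma submatrix_castSucc_dwpfMatrix_snoc {n : ℕ} {κ : Type*} (u : Fin m → ℂ) (x : ℂ)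
    (v : Fin n → ℂ) (f : κ → Fin n) :
    (dwpfMatrix c (Fin.snoc u x : Fin (m + 1) → ℂ) v).submatrix Fin.castSucc f
      = (dwpfMatrix c u v).submatrix id f := by
  ext j k
  simp [dwpfMatrix]

lemma det_dwpfMatrix_snoc_submatrix_castSucc (u v : Fin m → ℂ) (y : ℂ) :
    ((dwpfMatrix c u (Fin.snoc v y : Fin (m + 1) → ℂ)).submatrix id Fin.castSucc).det
      = (∏ j, hH c (u j) y) * (dwpfMatrix c u v).det := by
  rw [← Matrix.det_mul_column]
  congr 1
  ext j k
  simp [dwpfMatrix, Fin.prod_univ_castSucc, (Fin.castSucc_lt_last k).ne']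
  ring

lemma dwpfMatrix_snoc_last_last (u v : Fin m → ℂ) (x y : ℂ) :
    dwpfMatrix c (Fin.snoc u x : Fin (m + 1) → ℂ) (Fin.snoc v y) (Fin.last m) (Fin.last m)
      = gG c x y * ∏ k, hH c x (v k) := by
  simp [dwpfMatrix, Fin.prod_univ_castSucc, (Fin.castSucc_lt_last _).ne]

lemma continuousAt_dwpfMatrix_snoc_last (u : Fin m → ℂ) {n : ℕ} (w : Fin n → ℂ) {y : ℂ}
    (k : Fin n) (hk : w k ≠ y) :
    ContinuousAt (fun x => dwpfMatrix c (Fin.snoc u x : Fin (m + 1) → ℂ) w (Fin.last m) k) y := by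
  simp only [dwpfMatrix, Matrix.of_apply, Fin.snoc_last, gG, hH]
  refine ContinuousAt.mul ?_ (continuous_finsetProd _ fun k' _ => ?_).continuousAt
  · fun_prop (disch := exact sub_ne_zero.2 hk.symm)
  · split_ifs <;> fun_prop

lemma exists_continuousAt_dwpf_snoc_eq {u v : Fin m → ℂ} {y : ℂ} (hu : ∀ j, u j ≠ y)
    (hv : ∀ k, v k ≠ y) :
    ∃ D : ℂ → ℂ, ContinuousAt D y ∧ ∀ x, dwpf c (Fin.snoc u x) (Fin.snoc v y) = D x +
      gG c x y * ((∏ j, gG c (u j) x * hH c (u j) y) * (∏ k, gG c y (v k) * hH c x (v k)) *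
        dwpf c u v) := by
  refine ⟨fun x => deltaPrime c u * delta c v * (∏ j, gG c (u j) x) * (∏ k, gG c y (v k)) *
    ∑ k : Fin m, (-1) ^ (m + (k : ℕ)) *
      dwpfMatrix c (Fin.snoc u x : Fin (m + 1) → ℂ) (Fin.snoc v y) (Fin.last m) k.castSucc *
      ((dwpfMatrix c u (Fin.snoc v y)).submatrix id k.castSucc.succAbove).det, ?_, fun x => ?_⟩
  · have hrow (k : Fin m) := continuousAt_dwpfMatrix_snoc_last (c := c) u (Fin.snoc v y)
      k.castSucc (by simpa using hv k)
    simp only [gG]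
    fun_prop (disch := exact sub_ne_zero.2 (hu _))
  · rw [dwpf, dwpf, deltaPrime_snoc, delta_snoc, Matrix.det_succ_row_last]
    simp only [submatrix_castSucc_dwpfMatrix_snoc, dwpfMatrix_snoc_last_last,
      det_dwpfMatrix_snoc_submatrix_castSucc, Finset.prod_mul_distrib]
    ring

theorem dwpf_snoc_pole (hc : c ≠ 0) {u v : Fin m → ℂ} {y : ℂ} (hu : ∀ j, u j ≠ y)
    (hv : ∀ k, v k ≠ y) :
    Tendsto (fun x => (x - y) * dwpf c (Fin.snoc u x) (Fin.snoc v y)) (𝓝[≠] y)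
      (𝓝 (c * (∏ k, fF c y (v k)) * (∏ j, fF c (u j) y) * dwpf c u v)) ∧
    ∃ r, Tendsto (fun x => dwpf c (Fin.snoc u x) (Fin.snoc v y) -
      gG c x y * (∏ k, fF c y (v k)) * (∏ j, fF c (u j) x) * dwpf c u v) (𝓝[≠] y) (𝓝 r) := by
  obtain ⟨D, hD, hdecomp⟩ := exists_continuousAt_dwpf_snoc_eq hu hv
  set E := fun x => (∏ j, gG c (u j) x * hH c (u j) y) * (∏ k, gG c y (v k) * hH c x (v k)) *
    dwpf c u v
  set Q := fun x => (∏ k, fF c y (v k)) * (∏ j, fF c (u j) x) * dwpf c u v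
  have hu' (j : Fin m) : u j - y ≠ 0 := sub_ne_zero.2 (hu j)
  have hE : DifferentiableAt ℂ E y := by
    simp only [E, gG, hH]
    fun_prop (disch := exact hu' _)
  have hQ : DifferentiableAt ℂ Q y := by
    simp only [Q, fF]
    fun_prop (disch := exact hu' _)
  have hEQ : E y = Q y := by
    simp only [E, Q, fF_eq_gG_mul_hH c hc, Finset.prod_mul_distrib]
    ring
  constructor
  · have hpole : Tendsto _ _ (𝓝 (c * E y)) :=
      tendsto_sub_mul_of_eq_add_gG_mul hdecomp hD hE.continuousAt
    rw [hEQ] at hpole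
    simpa only [Q, mul_assoc] using hpole
  · simpa only [Q, mul_assoc] using
      exists_tendsto_sub_gG_mul_of_eq_add_gG_mul hdecomp hD hE hQ hEQ

end Dwpf

lemma List.prod_map_eq_prod_getD {α M : Type*} [CommMonoid M] {n : ℕ} (L : List α)
    (hL : L.length = n) (d : α) (g : α → M) :
    (L.map g).prod = ∏ k : Fin n, g (L.getD k d) := by
  subst hL
  conv_lhs => rw [← List.ofFn_getElem (xs := L)]
  rw [List.map_ofFn, List.prod_ofFn]
  simp

lemma List.getD_mem {α : Type*} {L : List α} {i : ℕ} (hi : i < L.length) (d : α) :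
    L.getD i d ∈ L := by
  rw [List.getD_eq_getElem _ _ hi]
  exact List.getElem_mem hi

lemma List.getD_append_singleton_eq_snoc {α : Type*} {m : ℕ} (L : List α) (hL : L.length = m)
    (a d : α) :
    (fun j : Fin (m + 1) => (L ++ [a]).getD j d) = Fin.snoc (fun j : Fin m => L.getD j d) a := by
  funext j
  induction j using Fin.lastCases <;> simp [hL]

lemma Kd_eq_dwpf (c : ℂ) {n : ℕ} (U V : List ℂ) (hU : U.length = n) (hV : V.length = n) :
    Kd c U V = dwpf c (fun j : Fin n => U.getD j 0) (fun k : Fin n => V.getD k 0) := by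
  subst hU
  simp only [Kd, dwpf, deltaPrime, delta, dwpfMatrix, List.getD_eq_getElem _ _ (Fin.is_lt _)]
  congr 2
  rw [← Fin.prod_congr' _ hV.symm]
  refine Finset.prod_congr rfl fun j _ => ?_
  rw [← Fin.prod_congr' _ hV.symm]
  simp [hV]

open Topology Filter in
theorem stmt4_general (c : ℂ) (hc : c ≠ 0) (n : ℕ) (U' V' : List ℂ)
    (hU : U'.length = n - 1) (hV : V'.length = n - 1) (vl : ℂ)
    (hgen : Generic c (U' ++ V' ++ [vl])) :
    Filter.Tendsto (fun x : ℂ => (x - vl) * Kd c (U' ++ [x]) (V' ++ [vl])) (𝓝[≠] vl)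
      (𝓝 (c * pF (fF c) [vl] V' * pF (fF c) U' [vl] * Kd c U' V')) ∧
    ∃ r : ℂ, Filter.Tendsto
      (fun x : ℂ => Kd c (U' ++ [x]) (V' ++ [vl]) -
        gG c x vl * pF (fF c) [vl] V' * pF (fF c) U' [x] * Kd c U' V') (𝓝[≠] vl) (𝓝 r) := by
  set u : Fin (n - 1) → ℂ := fun j => U'.getD j 0
  set v : Fin (n - 1) → ℂ := fun k => V'.getD k 0
  have hne : ∀ a ∈ U' ++ V', a ≠ vl := fun a ha =>
    ((List.pairwise_append.mp hgen).2.2 a ha vl (List.mem_singleton_self vl)).1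
  have hu (j : Fin (n - 1)) : u j ≠ vl :=
    hne _ (List.mem_append_left _ (List.getD_mem (by omega) 0))
  have hv (k : Fin (n - 1)) : v k ≠ vl :=
    hne _ (List.mem_append_right _ (List.getD_mem (by omega) 0))
  have hK (x : ℂ) : Kd c (U' ++ [x]) (V' ++ [vl]) = dwpf c (Fin.snoc u x) (Fin.snoc v vl) := by
    rw [Kd_eq_dwpf (n := n - 1 + 1) c _ _ (by simp [hU]) (by simp [hV]),
      List.getD_append_singleton_eq_snoc _ hU, List.getD_append_singleton_eq_snoc _ hV]
  have hpV : pF (fF c) [vl] V' = ∏ k, fF c vl (v k) := by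
    simp only [pF, List.map_singleton, List.prod_singleton]
    exact List.prod_map_eq_prod_getD V' hV 0 (fF c vl)
  have hpU (x : ℂ) : pF (fF c) U' [x] = ∏ j, fF c (u j) x := by
    simp only [pF, List.map_singleton, List.prod_singleton]
    exact List.prod_map_eq_prod_getD U' hU 0 (fF c · x)
  simp only [hK, hpV, hpU, Kd_eq_dwpf c U' V' hU hV]
  exact dwpf_snoc_pole hc hu hv

open Topology Filter in
/-- pole structure of the DWPF, eq. (A.1): as a function of the last argument
`u_n`, the DWPF has a simple pole at `u_n = v_n` with
`lim_{u_n→v_n} (u_n−v_n)·K(ū|v̄) = c·f(v_n,v̄_n)·f(ū_n,v_n)·K(ū_n|v̄_n)`;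
equivalently `K(ū|v̄) − g(u_n,v_n)·f(v_n,v̄_n)·f(ū_n,u_n)·K(ū_n|v̄_n)` is regular
(has a finite limit) at `u_n = v_n`. Here `ū_n`, `v̄_n` are the tuples with the last
element removed. -/
theorem stmt4 (c : ℂ) (hc : c ≠ 0) (n : ℕ) (hn : 1 ≤ n) (U' V' : List ℂ)
    (hU : U'.length = n - 1) (hV : V'.length = n - 1) (vl : ℂ)
    (hgen : Generic c (U' ++ V' ++ [vl])) :
    Filter.Tendsto (fun x : ℂ => (x - vl) * Kd c (U' ++ [x]) (V' ++ [vl])) (𝓝[≠] vl)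
      (𝓝 (c * pF (fF c) [vl] V' * pF (fF c) U' [vl] * Kd c U' V')) ∧
    ∃ r : ℂ, Filter.Tendsto
      (fun x : ℂ => Kd c (U' ++ [x]) (V' ++ [vl]) -
        gG c x vl * pF (fF c) [vl] V' * pF (fF c) U' [x] * Kd c U' V') (𝓝[≠] vl) (𝓝 r) :=
  stmt4_general c hc n U' V' hU hV vl hgen
end

section
/- Let ū=(u_1,…,u_n) and v̄=(v_1,…,v_n) be tuples of complex numbers and z a complex number, all generic so that every denominator below is nonzero. Then K( (ū, z−c) | (v̄, z) ) = K( (ū, z) | (v̄, z+c) ) = −K(ū|v̄), where (ū, w) denotes the (n+1)-tuple obtained by adjoining w to ū. -/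
open scoped BigOperators

noncomputable def KF (c : ℂ) (n : ℕ) (u v : ℕ → ℂ) : ℂ :=
  (∏ j : Fin n, ∏ k : Fin n, if (j : ℕ) < (k : ℕ) then gG c (u j) (u k) else 1) *
  (∏ j : Fin n, ∏ k : Fin n, if (k : ℕ) < (j : ℕ) then gG c (v j) (v k) else 1) *
  Matrix.det (Matrix.of fun j k : Fin n =>
    gG c (u j) (v k) * ∏ k' : Fin n, if k' = k then 1 else hH c (u j) (v k'))

lemma KF_congr (c : ℂ) (n : ℕ) {u v u' v' : ℕ → ℂ}
    (hu : ∀ i < n, u i = u' i) (hv : ∀ i < n, v i = v' i) :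
    KF c n u v = KF c n u' v' := by
  unfold KF
  congr 1
  · congr 1
    · exact Finset.prod_congr rfl fun j _ => Finset.prod_congr rfl fun k _ => by
        rw [hu j j.isLt, hu k k.isLt]
    · exact Finset.prod_congr rfl fun j _ => Finset.prod_congr rfl fun k _ => by
        rw [hv j j.isLt, hv k k.isLt]
  · congr 1
    ext j k
    simp only [Matrix.of_apply]
    rw [hu j j.isLt, hv k k.isLt]
    congr 1
    exact Finset.prod_congr rfl fun k' _ => by rw [hv k' k'.isLt]

lemma keyFun (c : ℂ) (hc : c ≠ 0) (n : ℕ) (u v : ℕ → ℂ) (w : ℂ)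
    (hu : ∀ j < n, u j ≠ w) (hv : ∀ k < n, v k ≠ w + c)
    (hun : u n = w) (hvn : v n = w + c) :
    KF c (n + 1) u v = - KF c n u v := by
  have hnk : ∀ k : Fin n, ¬ (n < (k : ℕ)) := fun k => Nat.not_lt.mpr (le_of_lt k.isLt)
  have e1 : (∏ j : Fin (n+1), ∏ k : Fin (n+1), if (j : ℕ) < (k : ℕ) then gG c (u j) (u k) else 1)
      = (∏ j : Fin n, ∏ k : Fin n, if (j : ℕ) < (k : ℕ) then gG c (u j) (u k) else 1) *
        (∏ j : Fin n, gG c (u j) w) := by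
    simp only [Fin.prod_univ_castSucc, Fin.coe_castSucc, Fin.val_last, hun, Fin.is_lt, if_true,
      lt_irrefl, if_false, hnk, mul_one, Finset.prod_const_one]
    rw [Finset.prod_mul_distrib]
  have e2 : (∏ j : Fin (n+1), ∏ k : Fin (n+1), if (k : ℕ) < (j : ℕ) then gG c (v j) (v k) else 1)
      = (∏ j : Fin n, ∏ k : Fin n, if (k : ℕ) < (j : ℕ) then gG c (v j) (v k) else 1) *
        (∏ k : Fin n, gG c (w + c) (v k)) := by
    simp only [Fin.prod_univ_castSucc, Fin.coe_castSucc, Fin.val_last, hvn, Fin.is_lt, if_true,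
      lt_irrefl, if_false, hnk, mul_one, Finset.prod_const_one, one_mul]
  have hlastne : ∀ k : Fin n, Fin.castSucc k ≠ Fin.last n := fun k => (Fin.castSucc_lt_last k).ne
  have hzero : w - (w + c) + c = 0 := by ring
  have hgw : gG c w (w + c) = -1 := by
    unfold gG
    rw [show w - (w + c) = -c by ring, div_neg, div_self hc]
  have e3 : Matrix.det (Matrix.of fun j k : Fin (n+1) =>
        gG c (u j) (v k) * ∏ k' : Fin (n+1), if k' = k then 1 else hH c (u j) (v k'))
      = (-1) * (∏ k : Fin n, hH c w (v k)) * (∏ j : Fin n, hH c (u j) (w + c)) *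
        Matrix.det (Matrix.of fun j k : Fin n =>
          gG c (u j) (v k) * ∏ k' : Fin n, if k' = k then 1 else hH c (u j) (v k')) := by
    rw [Matrix.det_succ_row _ (Fin.last n)]
    rw [Finset.sum_eq_single (Fin.last n)]
    · have hsub : (Matrix.of fun j k : Fin (n+1) =>
          gG c (u j) (v k) * ∏ k' : Fin (n+1), if k' = k then 1 else hH c (u j) (v k')).submatrix
            (Fin.last n).succAbove (Fin.last n).succAbove
          = Matrix.of (fun j k : Fin n => hH c (u j) (w + c) *
              (Matrix.of fun j k : Fin n =>
                gG c (u j) (v k) * ∏ k' : Fin n, if k' = k then 1 else hH c (u j) (v k')) j k) := by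
        ext j k
        simp only [Matrix.submatrix_apply, Fin.succAbove_last, Matrix.of_apply,
          Fin.prod_univ_castSucc, Fin.castSucc_inj, Fin.coe_castSucc, Fin.val_last]
        rw [if_neg (fun h => (hlastne k) h.symm), hvn]
        ring
      rw [hsub, Matrix.det_mul_column]
      have hMll : (Matrix.of fun j k : Fin (n+1) =>
          gG c (u j) (v k) * ∏ k' : Fin (n+1), if k' = k then 1 else hH c (u j) (v k'))
            (Fin.last n) (Fin.last n)
          = (-1) * ∏ k : Fin n, hH c w (v k) := by
        simp only [Matrix.of_apply, Fin.val_last, hun, hvn, hgw]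
        congr 1
        rw [Fin.prod_univ_castSucc, if_pos rfl, mul_one]
        exact Finset.prod_congr rfl fun k _ => by rw [if_neg (hlastne k), Fin.coe_castSucc]
      rw [hMll]
      simp only [Fin.val_last]
      rw [show ((-1 : ℂ)) ^ (n + n) = 1 from Even.neg_one_pow ⟨n, rfl⟩]
      ring
    · intro k _ hk
      have : (Matrix.of fun j k : Fin (n+1) =>
          gG c (u j) (v k) * ∏ k' : Fin (n+1), if k' = k then 1 else hH c (u j) (v k'))
            (Fin.last n) k = 0 := by
        simp only [Matrix.of_apply]
        apply mul_eq_zero_of_right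
        apply Finset.prod_eq_zero (Finset.mem_univ (Fin.last n))
        rw [if_neg (fun h => hk h.symm), Fin.val_last, hun, hvn]
        unfold hH
        rw [hzero, zero_div]
      rw [this]
      ring
    · intro h
      exact absurd (Finset.mem_univ _) h
  have hXHu : (∏ j : Fin n, gG c (u j) w) * (∏ j : Fin n, hH c (u j) (w + c)) = 1 := by
    rw [← Finset.prod_mul_distrib]
    apply Finset.prod_eq_one
    intro j _
    have h1 : u (j : ℕ) - w ≠ 0 := sub_ne_zero.mpr (hu j j.isLt)
    unfold gG hH
    rw [show u (j : ℕ) - (w + c) + c = u (j : ℕ) - w by ring, div_mul_div_comm, mul_comm,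
      div_self (mul_ne_zero h1 hc)]
  have hYHv : (∏ k : Fin n, gG c (w + c) (v k)) * (∏ k : Fin n, hH c w (v k)) = 1 := by
    rw [← Finset.prod_mul_distrib]
    apply Finset.prod_eq_one
    intro k _
    have h1 : w + c - v (k : ℕ) ≠ 0 := fun h => hv k k.isLt (by linear_combination -h)
    unfold gG hH
    rw [show w - v (k : ℕ) + c = w + c - v (k : ℕ) by ring, div_mul_div_comm, mul_comm,
      div_self (mul_ne_zero h1 hc)]
  have final : ∀ (P1 P2 D X Y Hu Hv : ℂ), X * Hu = 1 → Y * Hv = 1 →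
      P1 * X * (P2 * Y) * ((-1) * Hv * Hu * D) = -(P1 * P2 * D) := by
    intro P1 P2 D X Y Hu Hv h1 h2
    linear_combination (-(P1 * P2 * D * Y * Hv)) * h1 + (-(P1 * P2 * D)) * h2
  unfold KF
  rw [e1, e2, e3]
  exact final _ _ _ _ _ _ _ hXHu hYHv

lemma Kd_eq_KF (c : ℂ) (U V : List ℂ) (h : V.length = U.length) :
    Kd c U V = KF c U.length (fun i => U.getD i 0) (fun i => V.getD i 0) := by
  have hU : ∀ j : Fin U.length, U.get j = U.getD (j : ℕ) 0 := fun j => by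
    rw [List.get_eq_getElem, List.getD_eq_getElem U 0 j.isLt]
  have hV : ∀ j : Fin V.length, V.get j = V.getD (j : ℕ) 0 := fun j => by
    rw [List.get_eq_getElem, List.getD_eq_getElem V 0 j.isLt]
  unfold Kd KF
  congr 1
  · congr 1
    · exact Finset.prod_congr rfl fun j _ => Finset.prod_congr rfl fun k _ => by
        rw [hU j, hU k]
    · refine Fintype.prod_equiv (finCongr h) _ _ fun j => ?_
      refine Fintype.prod_equiv (finCongr h) _ _ fun k => ?_
      simp only [finCongr_apply, Fin.coe_cast, hV j, hV k]
  · congr 1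
    ext j k
    simp only [Matrix.of_apply, hU j]

lemma key (c : ℂ) (hc : c ≠ 0) (U V : List ℂ) (hlen : V.length = U.length) (w : ℂ)
    (hUw : ∀ x ∈ U, x ≠ w) (hVw : ∀ x ∈ V, x ≠ w + c) :
    Kd c (U ++ [w]) (V ++ [w + c]) = - Kd c U V := by
  have h1 : (V ++ [w + c]).length = (U ++ [w]).length := by simp [hlen]
  rw [Kd_eq_KF c (U ++ [w]) (V ++ [w + c]) h1, Kd_eq_KF c U V hlen]
  have hl : (U ++ [w]).length = U.length + 1 := by simp
  rw [hl]
  rw [keyFun c hc U.length _ _ w ?hu ?hv ?hun ?hvn]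
  case hu =>
    intro j hj he
    rw [List.getD_append U [w] 0 j hj, List.getD_eq_getElem U 0 hj] at he
    exact hUw _ (List.getElem_mem hj) he
  case hv =>
    intro k hk he
    rw [← hlen] at hk
    rw [List.getD_append V [w + c] 0 k hk, List.getD_eq_getElem V 0 hk] at he
    exact hVw _ (List.getElem_mem hk) he
  case hun =>
    rw [List.getD_append_right U [w] 0 U.length le_rfl]
    simp
  case hvn =>
    rw [← hlen, List.getD_append_right V [w + c] 0 V.length le_rfl]
    simp
  refine congrArg Neg.neg (KF_congr c U.length ?_ ?_)
  · intro i hi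
    rw [List.getD_append U [w] 0 i hi]
  · intro i hi
    rw [← hlen] at hi
    rw [List.getD_append V [w + c] 0 i hi]

/-- first line of eq. (A.2):
`K((ū,z−c)|(v̄,z)) = K((ū,z)|(v̄,z+c)) = −K(ū|v̄)`. -/
theorem stmt5 (c : ℂ) (hc : c ≠ 0) (n : ℕ) (U V : List ℂ)
    (hU : U.length = n) (hV : V.length = n) (z : ℂ)
    (hgen : Generic c (U ++ V ++ [z])) :
    Kd c (U ++ [z - c]) (V ++ [z]) = - Kd c U V ∧
    Kd c (U ++ [z]) (V ++ [z + c]) = - Kd c U V := by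
  have hpair : ∀ x ∈ U ++ V, x ≠ z ∧ x - z ≠ c ∧ x - z ≠ -c := by
    unfold Generic at hgen
    rw [List.pairwise_append] at hgen
    intro x hx
    exact hgen.2.2 x hx z (List.mem_singleton.mpr rfl)
  have hlen : V.length = U.length := hV.trans hU.symm
  constructor
  · have h := key c hc U V hlen (z - c) ?_ ?_
    · rw [show z - c + c = z from by ring] at h
      exact h
    · intro x hx he
      exact (hpair x (List.mem_append_left V hx)).2.2 (by rw [he]; ring)
    · intro x hx he
      exact (hpair x (List.mem_append_right U hx)).1 (by rw [he]; ring)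
  · refine key c hc U V hlen z ?_ ?_
    · intro x hx
      exact (hpair x (List.mem_append_left V hx)).1
    · intro x hx he
      exact (hpair x (List.mem_append_right U hx)).2.1 (by rw [he]; ring)
end

section
/- Let ū=(u_1,…,u_n) and v̄=(v_1,…,v_n) be tuples of complex numbers, all generic so that every denominator below is nonzero. Writing K_c for the DWPF built from the constant c, the following identities hold: (i) K_c(ū−c|v̄) = K_c(ū|v̄+c) = (−1)^n · K_c(v̄|ū) / f(v̄,ū), where ū±c denotes the tuple with every element shifted by ±c; (ii) K_{−c}(ū|v̄) = K_c(v̄|ū), i.e. replacing c by −c in K interchanges the two argument tuples. -/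
open scoped BigOperators

/-!
Since every `h(u_j, v_k)` is nonzero, the prefactor `h(ū,v̄)` can be pulled back out of the
determinant: `K_c(ū|v̄) = Δ'(ū)·Δ(v̄)·h(ū,v̄)·det M(ū,v̄)` with `M_{jk} = g(u_j,v_k)/h(u_j,v_k)`.
As `g` and `h` depend only on `x - y`, `K` is translation invariant, so `K(ū|v̄+c) = K(ū-c|v̄)`.
The scalar identities `(g/h)(x-c, y) = (g/h)(y, x)` and `(g/h)_{-c}(x, y) = (g/h)_c(y, x)` make
`M(ū-c, v̄)` and `M_{-c}(ū, v̄)` the transpose of `M(v̄, ū)`, while `h(x-c, y)·f(y, x) = -h(y, x)`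
accounts for the factor `(-1)^{n²} = (-1)^n`. Finally `Δ'(w̄)/Δ(w̄)` is a sign depending only on
`n`, so `Δ'(ū)Δ(v̄) = Δ'(v̄)Δ(ū)`, and changing `c` to `-c` swaps `Δ'` and `Δ`.
-/

theorem Matrix.det_of_mul_prod_ite_ne {K ι : Type*} [Field K] [Fintype ι] [DecidableEq ι]
    (g h : ι → ι → K) (hh : ∀ i j, h i j ≠ 0) :
    (Matrix.of fun i j => g i j * ∏ j', if j' = j then 1 else h i j').det =
      (∏ i, ∏ j, h i j) * (Matrix.of fun i j => g i j / h i j).det := by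
  rw [← Matrix.det_mul_column]
  congr 1
  ext i j
  have hrow : (∏ j', if j' = j then 1 else h i j') * h i j = ∏ j', h i j' := by
    rw [Finset.prod_ite, Finset.prod_const_one, one_mul, Finset.filter_ne',
      Finset.prod_erase_mul _ _ (Finset.mem_univ j)]
  simp only [Matrix.of_apply]
  rw [← hrow]
  field_simp [hh i j]

section Kernel

variable (c : ℂ)

lemma gG_add_add (x y a : ℂ) : gG c (x + a) (y + a) = gG c x y := by
  rw [gG, gG, add_sub_add_right_eq_sub]

lemma hH_add_add (x y a : ℂ) : hH c (x + a) (y + a) = hH c x y := by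
  rw [hH, hH, add_sub_add_right_eq_sub]

lemma gG_neg (x y : ℂ) : gG (-c) x y = gG c y x := by
  rw [gG, gG, ← neg_sub, div_neg, neg_div, neg_neg]

lemma hH_neg (x y : ℂ) : hH (-c) x y = hH c y x := by
  rw [hH, hH, div_neg, ← neg_div]
  ring_nf

lemma gG_swap (x y : ℂ) : gG c x y = -gG c y x := by
  rw [gG, gG, ← div_neg, neg_sub]

lemma gG_div_hH_sub_left (x y : ℂ) :
    gG c (x - c) y / hH c (x - c) y = gG c y x / hH c y x := by
  have hxyc : x - c - y + c = x - y := by ring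
  have hyxc : y - x + c = -(x - c - y) := by ring
  rw [gG, gG, hH, hH, hxyc, hyxc, ← neg_sub x y]
  simp only [div_neg, neg_div, div_div_eq_mul_div]
  ring

lemma hH_sub_left_mul_fF {x y : ℂ} (hxy : x ≠ y) :
    hH c (x - c) y * fF c y x = -hH c y x := by
  have hyx : y - x ≠ 0 := sub_ne_zero.mpr hxy.symm
  rw [hH, hH, fF]
  field_simp
  ring

variable {c}

lemma hH_ne_zero (hc : c ≠ 0) {x y : ℂ} (h : y - x ≠ c) : hH c x y ≠ 0 :=
  div_ne_zero (fun h' => h (by linear_combination -h')) hc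

lemma fF_ne_zero {x y : ℂ} (hxy : x ≠ y) (h : y - x ≠ c) : fF c x y ≠ 0 :=
  div_ne_zero (fun h' => h (by linear_combination -h')) (sub_ne_zero.mpr hxy)

end Kernel

open scoped Matrix

noncomputable section FinTuples

variable (c : ℂ) {n : ℕ}

-- `upperProd`, `lowerProd` and `kernelMatrix` are `Δ'`, `Δ` and `M` above.
def upperProd (w : Fin n → ℂ) : ℂ :=
  ∏ j : Fin n, ∏ k : Fin n, if (j : ℕ) < k then gG c (w j) (w k) else 1

def lowerProd (w : Fin n → ℂ) : ℂ :=
  ∏ j : Fin n, ∏ k : Fin n, if (k : ℕ) < j then gG c (w j) (w k) else 1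

def KdFin (u v : Fin n → ℂ) : ℂ :=
  upperProd c u * lowerProd c v *
    (Matrix.of fun j k => gG c (u j) (v k) * ∏ k', if k' = k then 1 else hH c (u j) (v k')).det

def kernelMatrix (u v : Fin n → ℂ) : Matrix (Fin n) (Fin n) ℂ :=
  Matrix.of fun j k => gG c (u j) (v k) / hH c (u j) (v k)

lemma upperProd_eq_sign_mul_lowerProd (w : Fin n → ℂ) :
    upperProd c w = (∏ j : Fin n, ∏ k : Fin n, if (j : ℕ) < k then -1 else 1) * lowerProd c w := by
  have hlower : lowerProd c w =
      ∏ j : Fin n, ∏ k : Fin n, if (j : ℕ) < k then gG c (w k) (w j) else 1 :=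
    Finset.prod_comm
  rw [hlower, ← Finset.prod_mul_distrib]
  refine Finset.prod_congr rfl fun j _ => ?_
  rw [← Finset.prod_mul_distrib]
  refine Finset.prod_congr rfl fun k _ => ?_
  split_ifs <;> simp [gG_swap c (w j)]

lemma upperProd_mul_lowerProd_comm (u v : Fin n → ℂ) :
    upperProd c u * lowerProd c v = upperProd c v * lowerProd c u := by
  rw [upperProd_eq_sign_mul_lowerProd, upperProd_eq_sign_mul_lowerProd]
  ring

lemma upperProd_neg (w : Fin n → ℂ) : upperProd (-c) w = lowerProd c w := by
  rw [lowerProd, Finset.prod_comm]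
  simp only [upperProd, gG_neg]

lemma lowerProd_neg (w : Fin n → ℂ) : lowerProd (-c) w = upperProd c w := by
  rw [upperProd, Finset.prod_comm]
  simp only [lowerProd, gG_neg]

lemma KdFin_add_add (u v : Fin n → ℂ) (a : ℂ) :
    KdFin c (fun j => u j + a) (fun k => v k + a) = KdFin c u v := by
  simp only [KdFin, upperProd, lowerProd, gG_add_add, hH_add_add]

lemma KdFin_right_add_eq_left_sub (u v : Fin n → ℂ) :
    KdFin c u (fun k => v k + c) = KdFin c (fun j => u j - c) v := by
  simpa only [sub_add_cancel] using KdFin_add_add c (fun j => u j - c) v c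

lemma KdFin_eq_mul_det_kernelMatrix {u v : Fin n → ℂ} (hh : ∀ j k, hH c (u j) (v k) ≠ 0) :
    KdFin c u v = upperProd c u * lowerProd c v *
      ((∏ j, ∏ k, hH c (u j) (v k)) * (kernelMatrix c u v).det) := by
  rw [KdFin, Matrix.det_of_mul_prod_ite_ne _ _ hh, kernelMatrix]

lemma kernelMatrix_left_sub (u v : Fin n → ℂ) :
    kernelMatrix c (fun j => u j - c) v = (kernelMatrix c v u)ᵀ := by
  ext j k
  exact gG_div_hH_sub_left c (u j) (v k)

lemma kernelMatrix_neg (u v : Fin n → ℂ) :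
    kernelMatrix (-c) u v = (kernelMatrix c v u)ᵀ := by
  ext j k
  simp only [kernelMatrix, Matrix.of_apply, Matrix.transpose_apply, gG_neg, hH_neg]

variable {c} {u v : Fin n → ℂ}

lemma prod_hH_left_sub_mul_prod_fF (h0 : ∀ j k, u j ≠ v k) :
    (∏ j, ∏ k, hH c (u j - c) (v k)) * ∏ j, ∏ k, fF c (v j) (u k) =
      (-1) ^ n * ∏ j, ∏ k, hH c (v j) (u k) := by
  have hsign : ((-1 : ℂ) ^ n) ^ n = (-1) ^ n := by
    rw [← pow_mul]
    exact neg_one_pow_congr (by simp [Nat.even_mul])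
  calc (∏ j, ∏ k, hH c (u j - c) (v k)) * ∏ j, ∏ k, fF c (v j) (u k)
      = ∏ j, ∏ k, hH c (u k - c) (v j) * fF c (v j) (u k) := by
        rw [Finset.prod_comm, ← Finset.prod_mul_distrib]
        simp only [Finset.prod_mul_distrib]
    _ = ∏ j, ∏ k, -hH c (v j) (u k) := by
        simp only [hH_sub_left_mul_fF c (h0 _ _)]
    _ = (-1) ^ n * ∏ j, ∏ k, hH c (v j) (u k) := by
        simp only [Finset.prod_neg, Finset.prod_mul_distrib, Finset.prod_const, Finset.card_univ,
          Fintype.card_fin, hsign]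

theorem KdFin_left_sub (hc : c ≠ 0) (h0 : ∀ j k, u j ≠ v k) (h1 : ∀ j k, u j - v k ≠ c) :
    KdFin c (fun j => u j - c) v = (-1) ^ n * KdFin c v u / ∏ j, ∏ k, fF c (v j) (u k) := by
  have hF : ∏ j, ∏ k, fF c (v j) (u k) ≠ 0 :=
    Finset.prod_ne_zero_iff.mpr fun j _ => Finset.prod_ne_zero_iff.mpr fun k _ =>
      fF_ne_zero (h0 k j).symm (h1 k j)
  have hvu : ∀ j k, hH c (v j) (u k) ≠ 0 := fun j k => hH_ne_zero hc (h1 k j)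
  have huv : ∀ j k, hH c (u j - c) (v k) ≠ 0 := fun j k =>
    hH_ne_zero hc fun h => h0 j k (by linear_combination -h)
  have hupper : upperProd c (fun j => u j - c) = upperProd c u := by
    simp only [upperProd, sub_eq_add_neg, gG_add_add]
  rw [eq_div_iff hF, KdFin_eq_mul_det_kernelMatrix _ huv, KdFin_eq_mul_det_kernelMatrix _ hvu,
    kernelMatrix_left_sub, Matrix.det_transpose, upperProd_mul_lowerProd_comm c v u, hupper]
  linear_combination upperProd c u * lowerProd c v * (kernelMatrix c v u).det *
    prod_hH_left_sub_mul_prod_fF h0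

theorem KdFin_neg (hc : c ≠ 0) (h1 : ∀ j k, u j - v k ≠ c) : KdFin (-c) u v = KdFin c v u := by
  have hvu : ∀ j k, hH c (v j) (u k) ≠ 0 := fun j k => hH_ne_zero hc (h1 k j)
  rw [KdFin_eq_mul_det_kernelMatrix _ hvu, KdFin_eq_mul_det_kernelMatrix _ ?_, kernelMatrix_neg,
    Matrix.det_transpose, upperProd_neg, lowerProd_neg, Finset.prod_comm]
  · simp only [hH_neg]
    ring
  · simpa only [hH_neg] using fun j k => hvu k j

end FinTuples

section Lists

variable {n : ℕ}

theorem Kd_eq_KdFin (c : ℂ) {U V : List ℂ} (hU : U.length = n) (hV : V.length = n) :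
    Kd c U V = KdFin c (fun j : Fin n => U.getD j 0) (fun k : Fin n => V.getD k 0) := by
  subst hU
  unfold Kd KdFin upperProd lowerProd
  congr 2
  · simp
  · rw [← hV]
    simp
  · simp

theorem pF_eq_prod (F : ℂ → ℂ → ℂ) {U V : List ℂ} (hU : U.length = n) (hV : V.length = n) :
    pF F U V = ∏ j : Fin n, ∏ k : Fin n, F (U.getD j 0) (V.getD k 0) := by
  subst hU
  simp only [pF, ← Fin.prod_univ_fun_getElem]
  refine Finset.prod_congr rfl fun j _ => Fintype.prod_equiv (finCongr hV) _ _ fun k => ?_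
  simp

lemma getD_map_sub {U : List ℂ} {j : ℕ} (hj : j < U.length) (a : ℂ) :
    (U.map (· - a)).getD j 0 = U.getD j 0 - a := by
  simp [hj]

lemma getD_map_add {U : List ℂ} {j : ℕ} (hj : j < U.length) (a : ℂ) :
    (U.map (· + a)).getD j 0 = U.getD j 0 + a := by
  simp [hj]

lemma Generic.getD_sep {c : ℂ} {U V : List ℂ} (h : Generic c (U ++ V)) {j k : ℕ}
    (hj : j < U.length) (hk : k < V.length) :
    U.getD j 0 ≠ V.getD k 0 ∧ U.getD j 0 - V.getD k 0 ≠ c := by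
  rw [List.getD_eq_getElem _ _ hj, List.getD_eq_getElem _ _ hk]
  have := (List.pairwise_append.mp h).2.2 _ (List.getElem_mem hj) _ (List.getElem_mem hk)
  exact ⟨this.1, this.2.1⟩

end Lists

/-- second and third lines of eq. (A.2):
(i) `K_c(ū−c|v̄) = K_c(ū|v̄+c) = (−1)^n·K_c(v̄|ū)/f(v̄,ū)`;
(ii) `K_{−c}(ū|v̄) = K_c(v̄|ū)`. -/
theorem stmt6 (c : ℂ) (hc : c ≠ 0) (n : ℕ) (U V : List ℂ)
    (hU : U.length = n) (hV : V.length = n)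
    (hgen : Generic c (U ++ V)) :
    Kd c (U.map (· - c)) V = (-1 : ℂ) ^ n * Kd c V U / pF (fF c) V U ∧
    Kd c U (V.map (· + c)) = (-1 : ℂ) ^ n * Kd c V U / pF (fF c) V U ∧
    Kd (-c) U V = Kd c V U := by
  set u : Fin n → ℂ := fun j => U.getD j 0
  set v : Fin n → ℂ := fun k => V.getD k 0
  have hsep : ∀ j k, u j ≠ v k ∧ u j - v k ≠ c := fun j k =>
    hgen.getD_sep (by omega) (by omega)
  have hleft : Kd c (U.map (· - c)) V = KdFin c (fun j => u j - c) v := by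
    rw [Kd_eq_KdFin c ((List.length_map _).trans hU) hV]
    congr
    funext j
    exact getD_map_sub (by omega) c
  have hright : Kd c U (V.map (· + c)) = KdFin c u (fun k => v k + c) := by
    rw [Kd_eq_KdFin c hU ((List.length_map _).trans hV)]
    congr
    funext k
    exact getD_map_add (by omega) c
  have hshift := KdFin_left_sub hc (fun j k => (hsep j k).1) (fun j k => (hsep j k).2)
  rw [hleft, hright, KdFin_right_add_eq_left_sub, Kd_eq_KdFin c hV hU, Kd_eq_KdFin (-c) hU hV,
    pF_eq_prod _ hV hU]
  exact ⟨hshift, hshift, KdFin_neg hc fun j k => (hsep j k).2⟩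
end

section
/- Let n ≥ 1, let W be a tuple of n pairwise distinct complex numbers, U a tuple of n−1 complex numbers, and u a further complex number, all generic so that every denominator below is nonzero. Then the sum over all partitions of W into a single element w_ρ and the complementary subset W' satisfies: Σ g(w_ρ, W')·g(u, w_ρ)/h(W', U) = h(u, U)·g(u, W)/h(W, U). -/
/-! The function `H(x) = h(x, U)` is a polynomial of degree `n - 1 < n`, so it equals its Lagrange
interpolant on the `n` nodes `W`. Evaluated at `u`, off the nodes, this is the partial-fraction
identity `H(u) / ∏ⱼ (u - wⱼ) = ∑ₖ H(wₖ) / ((u - wₖ) ∏_{j ≠ k} (wₖ - wⱼ))`, and the theorem is this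
identity multiplied by `cⁿ / h(W, U)`, because `1 / h(W', U) = H(w_ρ) / h(W, U)`. -/

open scoped BigOperators

open Finset Polynomial

namespace Lagrange

variable {F ι : Type*} [Field F] [DecidableEq ι] {s : Finset ι} {v : ι → F} {P : F[X]} {x : F}

theorem eval_div_prod_sub_eq_sum (hvs : Set.InjOn v s) (hP : P.degree < #s)
    (hx : ∀ i ∈ s, x ≠ v i) :
    P.eval x / ∏ i ∈ s, (x - v i) = ∑ i ∈ s, nodalWeight s v i * (x - v i)⁻¹ * P.eval (v i) := by
  have h := eval_interpolate_not_at_node (fun i => P.eval (v i)) hx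
  rw [← eq_interpolate hvs hP, eval_nodal] at h
  rw [h, mul_div_cancel_left₀ _ (prod_ne_zero_iff.mpr fun i hi => sub_ne_zero.mpr (hx i hi))]

theorem sum_prod_div_sub_mul_div_prod_eval (c : F) (hvs : Set.InjOn v s) (hP : P.degree < #s)
    (hx : ∀ i ∈ s, x ≠ v i) (hPv : ∀ i ∈ s, P.eval (v i) ≠ 0) :
    ∑ k ∈ s, (∏ j ∈ s.erase k, c / (v k - v j)) * (c / (x - v k)) / ∏ j ∈ s.erase k, P.eval (v j)
      = P.eval x * (∏ j ∈ s, c / (x - v j)) / ∏ j ∈ s, P.eval (v j) := by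
  have hrhs : P.eval x * (∏ j ∈ s, c / (x - v j)) / ∏ j ∈ s, P.eval (v j)
      = (∏ j ∈ s, c) / (∏ j ∈ s, P.eval (v j)) * (P.eval x / ∏ i ∈ s, (x - v i)) := by
    rw [prod_div_distrib]; ring
  rw [hrhs, eval_div_prod_sub_eq_sum hvs hP hx, mul_sum]
  refine sum_congr rfl fun k hk => ?_
  have hPk := hPv k hk
  rw [← prod_erase_mul s _ hk, ← prod_erase_mul s (fun j => P.eval (v j)) hk, nodalWeight]
  simp only [div_eq_mul_inv, prod_mul_distrib]
  field_simp

end Lagrange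

theorem prod_map_eq_prod_get (L : List ℂ) (f : ℂ → ℂ) :
    (L.map f).prod = ∏ i : Fin L.length, f (L.get i) := by
  simp

theorem prod_map_subL (L : List ℂ) (A : Finset (Fin L.length)) (f : ℂ → ℂ) :
    ((subL L A).map f).prod = ∏ j ∈ A, f (L.get j) := by
  rw [subL, List.map_map, ← prod_map_toList]
  exact ((sort_perm_toList (s := A) (r := (· ≤ ·))).map _).prod_eq

theorem pF_singleton (F : ℂ → ℂ → ℂ) (x : ℂ) (V : List ℂ) : pF F [x] V = (V.map (F x)).prod := by
  simp [pF]

theorem pF_eq_prod_get (F : ℂ → ℂ → ℂ) (U V : List ℂ) :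
    pF F U V = ∏ i : Fin U.length, (V.map (F (U.get i))).prod :=
  prod_map_eq_prod_get U _

theorem pF_subL (F : ℂ → ℂ → ℂ) (L : List ℂ) (A : Finset (Fin L.length)) (V : List ℂ) :
    pF F (subL L A) V = ∏ j ∈ A, (V.map (F (L.get j))).prod :=
  prod_map_subL L A _

noncomputable def hPoly (c : ℂ) (U : List ℂ) : ℂ[X] :=
  (U.map fun y => C c⁻¹ * (X - C (y - c))).prod

theorem eval_hPoly (c x : ℂ) (U : List ℂ) : (hPoly c U).eval x = (U.map (hH c x)).prod := by
  rw [hPoly, eval_list_prod, List.map_map]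
  congr 1
  refine List.map_congr_left fun y _ => ?_
  simp only [Function.comp_apply, eval_mul, eval_C, eval_sub, eval_X, hH]
  ring

theorem natDegree_hPoly_le (c : ℂ) (U : List ℂ) : (hPoly c U).natDegree ≤ U.length := by
  induction U with
  | nil => simp [hPoly]
  | cons y U ih =>
    rw [hPoly] at ih
    rw [hPoly, List.map_cons, List.prod_cons, List.length_cons, add_comm U.length]
    exact natDegree_mul_le.trans <|
      Nat.add_le_add ((natDegree_C_mul_le _ _).trans (natDegree_X_sub_C_le _)) ih

theorem prod_map_hH_ne_zero {c x : ℂ} {U : List ℂ} (hc : c ≠ 0) (hxU : ∀ y ∈ U, x - y ≠ -c) :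
    (U.map (hH c x)).prod ≠ 0 := by
  refine List.prod_ne_zero fun h0 => ?_
  obtain ⟨y, hy, hxy⟩ := List.mem_map.mp h0
  refine hxU y hy ?_
  rw [hH, div_eq_zero_iff] at hxy
  linear_combination hxy.resolve_right hc

/-- eq. (3.16), Cauchy-determinant summation with shifted arguments:
`Σ g(w_ρ,W')·g(u,w_ρ)/h(W',U) = h(u,U)·g(u,W)/h(W,U)`,
the sum running over all partitions of `W` into a single element `w_ρ = W_k` and the
complementary subset `W'`. -/
theorem stmt9 (c : ℂ) (hc : c ≠ 0) (n : ℕ) (hn : 1 ≤ n) (W U : List ℂ)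
    (hW : W.length = n) (hU : U.length = n - 1) (u : ℂ)
    (hgen : Generic c (W ++ U ++ [u])) :
    ∑ k : Fin W.length,
      pF (gG c) [W.get k] (subL W (Finset.univ.erase k)) * gG c u (W.get k) /
        pF (hH c) (subL W (Finset.univ.erase k)) U
      = pF (hH c) [u] U * pF (gG c) [u] W / pF (hH c) W U := by
  rw [Generic, List.pairwise_append, List.pairwise_append] at hgen
  obtain ⟨⟨hWW, -, hWU⟩, -, hWu⟩ := hgen
  have hdeg : (hPoly c U).degree < #(univ : Finset (Fin W.length)) := by
    rw [card_univ, Fintype.card_fin]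
    exact degree_le_natDegree.trans_lt
      (by exact_mod_cast (natDegree_hPoly_le c U).trans_lt (by omega))
  have key := Lagrange.sum_prod_div_sub_mul_div_prod_eval c
    (List.nodup_iff_injective_get.mp (hWW.imp And.left)).injOn hdeg
    (fun i _ => (hWu _ (List.mem_append_left U (W.get_mem i)) u (List.mem_singleton_self u)).1.symm)
    (fun i _ => by
      rw [eval_hPoly]
      exact prod_map_hH_ne_zero hc fun y hy => (hWU _ (W.get_mem i) y hy).2.2)
  simp only [eval_hPoly] at key
  simp only [pF_singleton, pF_subL, pF_eq_prod_get _ W, prod_map_subL, prod_map_eq_prod_get W, gG]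
  exact key
end

section
/- Let u be a complex number and v̄ = (v_1,…,v_b) a tuple of complex numbers such that u, v_1, …, v_b are pairwise distinct and generic (all denominators below nonzero). Then the ordinary commutator satisfies [T_{12}(u), 𝕋_{23}(v̄)] = Σ_{k=1}^{b} g(u, v_k)·g(v̄_k, v_k)·( T_{13}(u)·𝕋_{23}(v̄_k)·T_{22}(v_k) − T_{13}(v_k)·𝕋_{23}(v̄_k)·T_{22}(u) ), where v̄_k = v̄ ∖ {v_k}. -/
open scoped BigOperators

/-- Product of (commuting, even) operators over a tuple of spectral parameters. -/
noncomputable def Tl {R : Type*} [Ring R] (T : ℂ → R) (L : List ℂ) : R := (L.map T).prod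

/-- Symmetrized product of odd operators from the third column:
`𝕋(v̄) = T(v_1)⋯T(v_n) / ∏_{l>m} h(v_l,v_m)`. -/
noncomputable def TTc {R : Type*} [Ring R] [Module ℂ R] (c : ℂ) (T : ℂ → R) (L : List ℂ) : R :=
  (∏ l : Fin L.length, ∏ m : Fin L.length,
      if (m : ℕ) < (l : ℕ) then hH c (L.get l) (L.get m) else 1)⁻¹ • (L.map T).prod

/-- Symmetrized product of odd operators from the third row:
`𝕋(v̄) = T(v_1)⋯T(v_n) / ∏_{l>m} h(v_m,v_l)`. -/
noncomputable def TTr {R : Type*} [Ring R] [Module ℂ R] (c : ℂ) (T : ℂ → R) (L : List ℂ) : R :=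
  (∏ l : Fin L.length, ∏ m : Fin L.length,
      if (m : ℕ) < (l : ℕ) then hH c (L.get m) (L.get l) else 1)⁻¹ • (L.map T).prod

/-- ℤ₂-parity of the `gl(2|1)` indices: `[1]=[2]=0`, `[3]=1`
(indices `0,1,2 : Fin 3` encode `1,2,3`). -/
def parG : Fin 3 → ℕ := fun i => if i = 2 then 1 else 0

/-- The `gl(2|1)` graded RTT commutation relations for the entries of the monodromy matrix. -/
def RTTrel {R : Type*} [Ring R] [Module ℂ R] (c : ℂ) (T : Fin 3 → Fin 3 → ℂ → R) : Prop :=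
  ∀ u v : ℂ, u ≠ v → ∀ i j k l : Fin 3,
    T i j u * T k l v - ((-1 : ℂ) ^ ((parG i + parG j) * (parG k + parG l))) • (T k l v * T i j u)
      = (((-1 : ℂ) ^ (parG i * (parG k + parG l) + parG k * parG l)) * gG c u v) •
          (T k j v * T i l u - T k j u * T i l v)

/-!
Induction on the length of `v̄`, peeling off its first entry `v` by means of
`𝕋(v :: W) = h(W, v)⁻¹ T₂₃(v) 𝕋(W)`. Since the commutator is a derivation,
`[T₁₂(u), T₂₃(v) 𝕋(W)] = [T₁₂(u), T₂₃(v)] 𝕋(W) + T₂₃(v) [T₁₂(u), 𝕋(W)]`. The first term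
brings in the action of `T₂₂` on `𝕋(W)`, which is computed by the same induction. In the second,
`T₂₃(v)` is moved through `T₁₃` by the exchange relation and absorbed into `𝕋`; the symmetry of
`𝕋` in its arguments (a consequence of the `T₂₃ T₂₃` relation) brings every term to a common
form. What remains are rational identities between the coefficients, the essential one being the
partial fraction expansion `∑ₖ g(vₖ, v) f(v̄ₖ, vₖ) = f(v̄, v) - 1`.
-/

namespace GL21

open scoped List

section Scalars

variable {c u v w x y z : ℂ}

theorem gG_swap (c x y : ℂ) : gG c y x = -gG c x y := by
  rw [gG, gG, ← neg_sub, div_neg]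

theorem fF_eq_one_add_gG (h : x ≠ y) : fF c x y = 1 + gG c x y := by
  have := sub_ne_zero.mpr h
  unfold fF gG
  field_simp

theorem fF_eq_gG_mul_hH (hc : c ≠ 0) (h : x ≠ y) : fF c x y = gG c x y * hH c x y := by
  have := sub_ne_zero.mpr h
  unfold fF gG hH
  field_simp

theorem hH_ne_zero (hc : c ≠ 0) (h : x - y ≠ -c) : hH c x y ≠ 0 :=
  div_ne_zero (fun h0 => h (by linear_combination h0)) hc

theorem gG_mul_gG (hxy : x ≠ y) (hyz : y ≠ z) (hxz : x ≠ z) :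
    gG c x y * gG c y z = gG c x z * (gG c x y + gG c y z) := by
  have := sub_ne_zero.mpr hxy
  have := sub_ne_zero.mpr hyz
  have := sub_ne_zero.mpr hxz
  unfold gG
  field_simp
  ring

theorem gG_mul_gG_sub_gG_mul_fF (huv : u ≠ v) (huz : u ≠ z) (hvz : v ≠ z) :
    gG c u v * gG c v z - gG c u z * fF c u v = hH c z v * gG c u z * gG c v z := by
  have := sub_ne_zero.mpr huv
  have := sub_ne_zero.mpr huz
  have := sub_ne_zero.mpr hvz
  rcases eq_or_ne c 0 with rfl | hc
  · simp [gG, fF, hH]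
  · unfold gG fF hH
    field_simp
    ring

theorem fF_mul_hH_mul_gG_add (hc : c ≠ 0) (hwy : w ≠ y) (hyz : y ≠ z) (hwz : w ≠ z) :
    fF c w y * hH c y w * gG c y z + gG c y w * hH c w y * gG c w z
      = gG c y z * gG c w z * hH c w y * hH c z w := by
  have := sub_ne_zero.mpr hwy
  have := sub_ne_zero.mpr hyz
  have := sub_ne_zero.mpr hwz
  have := sub_ne_zero.mpr hwy.symm
  unfold fF gG hH
  field_simp
  ring

end Scalars

/-- `tupleProd F L z` is the paper's `F(L, z) = ∏_{x ∈ L} F(x, z)`. -/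
noncomputable def tupleProd (F : ℂ → ℂ → ℂ) (L : List ℂ) (z : ℂ) : ℂ :=
  (L.map fun x => F x z).prod

section TupleProd

variable {F G H : ℂ → ℂ → ℂ} {L L' : List ℂ} {x z : ℂ}

@[simp]
theorem tupleProd_nil : tupleProd F [] z = 1 := rfl

@[simp]
theorem tupleProd_cons : tupleProd F (x :: L) z = F x z * tupleProd F L z := by
  simp [tupleProd]

theorem tupleProd_eq_prod_fin (F : ℂ → ℂ → ℂ) (L : List ℂ) (z : ℂ) :
    tupleProd F L z = ∏ i : Fin L.length, F (L.get i) z := by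
  rw [tupleProd, ← List.prod_ofFn]
  congr 1
  conv_lhs => rw [← List.ofFn_get L, List.map_ofFn]
  rfl

theorem tupleProd_perm (h : L ~ L') : tupleProd F L z = tupleProd F L' z :=
  (h.map _).prod_eq

theorem tupleProd_ne_zero (h : ∀ x ∈ L, F x z ≠ 0) : tupleProd F L z ≠ 0 :=
  List.prod_ne_zero fun h0 => by
    obtain ⟨x, hx, hfx⟩ := List.mem_map.mp h0
    exact h x hx hfx

theorem tupleProd_eq_mul (h : ∀ x ∈ L, F x z = G x z * H x z) :
    tupleProd F L z = tupleProd G L z * tupleProd H L z := by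
  induction L with
  | nil => simp
  | cons a L ih =>
    simp only [tupleProd_cons, List.forall_mem_cons] at h ⊢
    rw [h.1, ih h.2]
    ring

theorem tupleProd_fF {c : ℂ} (hc : c ≠ 0) (h : ∀ x ∈ L, x ≠ z) :
    tupleProd (fF c) L z = tupleProd (gG c) L z * tupleProd (hH c) L z :=
  tupleProd_eq_mul fun x hx => fF_eq_gG_mul_hH hc (h x hx)

theorem pF_singleton : pF F L [z] = tupleProd F L z := by
  simp [pF, tupleProd]

end TupleProd

def GenericPair (c x y : ℂ) : Prop :=
  x ≠ y ∧ x - y ≠ c ∧ x - y ≠ -c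

section Generic

variable {c a x y : ℂ} {L L' : List ℂ}

theorem GenericPair.symm (h : GenericPair c x y) : GenericPair c y x := by
  obtain ⟨h1, h2, h3⟩ := h
  refine ⟨h1.symm, fun h' => h3 ?_, fun h' => h2 ?_⟩ <;> linear_combination -h'

theorem GenericPair.hH_ne_zero (hc : c ≠ 0) (h : GenericPair c x y) : hH c x y ≠ 0 :=
  GL21.hH_ne_zero hc h.2.2

theorem _root_.Generic.pair (h : Generic c (a :: L)) (hx : x ∈ L) : GenericPair c a x :=
  (List.pairwise_cons.mp h).1 x hx

theorem _root_.Generic.tail (h : Generic c (a :: L)) : Generic c L :=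
  (List.pairwise_cons.mp h).2

theorem _root_.Generic.perm (h : Generic c L) (hp : L ~ L') : Generic c L' :=
  List.Pairwise.perm h hp GenericPair.symm

theorem _root_.Generic.sublist (h : Generic c L) (hs : L' <+ L) : Generic c L' :=
  List.Pairwise.sublist hs h

theorem _root_.Generic.nodup (h : Generic c L) : L.Nodup :=
  h.imp (·.1)

theorem _root_.Generic.tupleProd_hH_ne_zero (hc : c ≠ 0) (h : Generic c (a :: L)) (hL' : L' ⊆ L) :
    tupleProd (hH c) L' a ≠ 0 :=
  tupleProd_ne_zero fun _ hx => (h.pair (hL' hx)).symm.hH_ne_zero hc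

end Generic

/-- `pickSum W F = ∑ₖ F(wₖ, W ∖ wₖ)`: the paper's sums over a distinguished entry of a tuple. -/
noncomputable def pickSum {α M : Type*} [AddCommMonoid M] (W : List α) (F : α → List α → M) : M :=
  ∑ k : Fin W.length, F (W.get k) (W.eraseIdx k)

section PickSum

variable {α M : Type*} [AddCommMonoid M] {W : List α} {F G : α → List α → M}

@[simp]
theorem pickSum_nil : pickSum [] F = 0 := rfl

theorem pickSum_cons (w : α) (W : List α) :
    pickSum (w :: W) F = F w W + pickSum W fun x L => F x (w :: L) := by
  simp only [pickSum, List.length_cons]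
  rw [Fin.sum_univ_succ]
  rfl

theorem pickSum_congr (h : ∀ x L, x :: L ~ W → F x L = G x L) : pickSum W F = pickSum W G :=
  Finset.sum_congr rfl fun k _ => h _ _ (List.getElem_cons_eraseIdx_perm k.isLt)

theorem pickSum_smul {S : Type*} [Monoid S] [DistribMulAction S M] (r : S) :
    r • pickSum W F = pickSum W fun x L => r • F x L :=
  Finset.smul_sum

theorem mul_pickSum {S : Type*} [NonUnitalNonAssocSemiring S] {F : α → List α → S} (a : S) :
    a * pickSum W F = pickSum W fun x L => a * F x L :=
  Finset.mul_sum _ _ _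

theorem pickSum_smul_const {S : Type*} [Semiring S] [Module S M] (a : α → List α → S)
    (m : M) : (pickSum W fun x L => a x L • m) = pickSum W a • m :=
  (Finset.sum_smul ..).symm

theorem pickSum_add : (pickSum W fun x L => F x L + G x L) = pickSum W F + pickSum W G :=
  Finset.sum_add_distrib

theorem pickSum_sub {M : Type*} [AddCommGroup M] {F G : α → List α → M} :
    (pickSum W fun x L => F x L - G x L) = pickSum W F - pickSum W G :=
  Finset.sum_sub_distrib ..

end PickSum

section TTc

variable {R : Type*} [Ring R] [Algebra ℂ R] {c : ℂ} {B : ℂ → R}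

theorem TTc_cons (c : ℂ) (B : ℂ → R) (a : ℂ) (L : List ℂ) :
    TTc c B (a :: L) = (tupleProd (hH c) L a)⁻¹ • (B a * TTc c B L) := by
  have hpre : (∏ l : Fin (a :: L).length, ∏ m : Fin (a :: L).length,
      if (m : ℕ) < (l : ℕ) then hH c ((a :: L).get l) ((a :: L).get m) else 1)
      = tupleProd (hH c) L a * ∏ l : Fin L.length, ∏ m : Fin L.length,
          if (m : ℕ) < (l : ℕ) then hH c (L.get l) (L.get m) else 1 := by
    simp only [List.length_cons, Fin.prod_univ_succ, Fin.val_zero, Fin.val_succ,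
      Nat.not_lt_zero, if_false, Finset.prod_const_one, one_mul, Nat.zero_lt_succ, if_true,
      Nat.succ_lt_succ_iff, tupleProd_eq_prod_fin, ← Finset.prod_mul_distrib]
    rfl
  rw [TTc, TTc, hpre, mul_inv, mul_smul, List.map_cons, List.prod_cons, mul_smul_comm]

@[simp]
theorem TTc_nil : TTc c B [] = 1 := by
  simp [TTc]

theorem mul_TTc {a : ℂ} {L : List ℂ} (h : tupleProd (hH c) L a ≠ 0) :
    B a * TTc c B L = tupleProd (hH c) L a • TTc c B (a :: L) := by
  rw [TTc_cons, smul_inv_smul₀ h]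

end TTc

section Relations

variable {R : Type*} [Ring R] [Algebra ℂ R]

-- The exchange relations of the RTT algebra that the proof uses, for `A = T₁₂`, `B = T₂₃`,
-- `C = T₁₃` and `D = T₂₂`.
def RelBB (c : ℂ) (B : ℂ → R) : Prop :=
  ∀ ⦃x y : ℂ⦄, x ≠ y → hH c x y • (B x * B y) = hH c y x • (B y * B x)

def RelDB (c : ℂ) (B D : ℂ → R) : Prop :=
  ∀ ⦃v y : ℂ⦄, y ≠ v → D y * B v = fF c v y • (B v * D y) + gG c y v • (B y * D v)

def RelAB (c : ℂ) (A B C D : ℂ → R) : Prop :=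
  ∀ ⦃u v : ℂ⦄, u ≠ v → A u * B v = B v * A u + gG c u v • (C u * D v - C v * D u)

def RelBC (c : ℂ) (B C : ℂ → R) : Prop :=
  ∀ ⦃v x : ℂ⦄, v ≠ x → B v * C x = gG c x v • (C v * B x) - fF c x v • (C x * B v)

theorem parG_zero : parG 0 = 0 := rfl
theorem parG_one : parG 1 = 0 := rfl
theorem parG_two : parG 2 = 1 := rfl

variable {c : ℂ} {T : Fin 3 → Fin 3 → ℂ → R}

theorem _root_.RTTrel.relBB (hT : RTTrel c T) (hc : c ≠ 0) : RelBB c (T 1 2) := by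
  intro x y h
  have h0 := hT x y h 1 2 1 2
  norm_num [parG_zero, parG_one, parG_two] at h0
  have := sub_ne_zero.mpr h
  have e1 : hH c x y = (x - y) / c * gG c x y + (x - y) / c := by
    unfold hH gG
    field_simp
    ring
  have e2 : hH c y x = (x - y) / c * gG c x y - (x - y) / c := by
    unfold hH gG
    field_simp
    ring
  rw [e1, e2]
  linear_combination (norm := module) ((x - y) / c) • h0

theorem _root_.RTTrel.relDB (hT : RTTrel c T) : RelDB c (T 1 2) (T 1 1) := by
  intro v y h
  have h0 := hT v y h.symm 1 2 1 1
  norm_num [parG_zero, parG_one, parG_two] at h0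
  rw [fF_eq_one_add_gG h.symm, gG_swap c v y]
  linear_combination (norm := module) -h0

theorem _root_.RTTrel.relAB (hT : RTTrel c T) : RelAB c (T 0 1) (T 1 2) (T 0 2) (T 1 1) := by
  intro u v h
  have h0 := hT v u h.symm 1 2 0 1
  norm_num [parG_zero, parG_one, parG_two] at h0
  rw [gG_swap c u v] at h0
  linear_combination (norm := module) -h0

theorem _root_.RTTrel.relBC (hT : RTTrel c T) : RelBC c (T 1 2) (T 0 2) := by
  intro v x h
  have h0 := hT v x h 1 2 0 2
  norm_num [parG_zero, parG_one, parG_two] at h0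
  rw [gG_swap c x v] at h0
  rw [fF_eq_one_add_gG h.symm]
  linear_combination (norm := module) h0

end Relations

section Symmetry

variable {R : Type*} [Ring R] [Algebra ℂ R] {c : ℂ} {B : ℂ → R}

theorem TTc_swap (hc : c ≠ 0) (hBB : RelBB c B) {a b : ℂ} {X : List ℂ}
    (hgen : Generic c (a :: b :: X)) :
    TTc c B (a :: b :: X) = TTc c B (b :: a :: X) := by
  have hab := hgen.pair (x := b) List.mem_cons_self
  have hXa := hgen.tupleProd_hH_ne_zero (L' := X) hc (List.subset_cons_self b X)
  have hXb := hgen.tail.tupleProd_hH_ne_zero hc (List.Subset.refl X)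
  have hBab : B a * B b = ((hH c a b)⁻¹ * hH c b a) • (B b * B a) := by
    rw [mul_smul, eq_inv_smul_iff₀ (hab.hH_ne_zero hc), hBB hab.1]
  simp only [TTc_cons, tupleProd_cons, mul_smul_comm, smul_smul, ← mul_assoc, hBab,
    smul_mul_assoc]
  congr 1
  have := hab.hH_ne_zero hc
  have := hab.symm.hH_ne_zero hc
  field_simp

theorem TTc_perm (hc : c ≠ 0) (hBB : RelBB c B) {L L' : List ℂ} (hp : L ~ L')
    (hgen : Generic c L) : TTc c B L = TTc c B L' := by
  induction hp with
  | nil => rfl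
  | cons x hp ih => rw [TTc_cons, TTc_cons, tupleProd_perm hp, ih hgen.tail]
  | swap x y l => exact TTc_swap hc hBB hgen
  | trans hp₁ _ ih₁ ih₂ => exact (ih₁ hgen).trans (ih₂ (hgen.perm hp₁))

end Symmetry

section PartialFractions

variable {c : ℂ}

theorem pickSum_gG_mul_fF : ∀ {v : ℂ} {W : List ℂ}, (v :: W).Nodup →
    (pickSum W fun x L => gG c x v * tupleProd (fF c) L x) = tupleProd (fF c) W v - 1
  | _, [], _ => by simp
  | v, w :: W, hnd => by
    simp only [List.nodup_cons, List.mem_cons, not_or] at hnd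
    obtain ⟨⟨hvw, hvW⟩, hwW, hW⟩ := hnd
    have hterm : ∀ x L, x :: L ~ W → gG c x v * tupleProd (fF c) (w :: L) x
        = fF c w v * (gG c x v * tupleProd (fF c) L x)
          - gG c w v * (gG c x w * tupleProd (fF c) L x) := by
      intro x L hp
      have hx : x ∈ W := hp.subset List.mem_cons_self
      have hwx : w ≠ x := fun h => hwW (h ▸ hx)
      have hxv : x ≠ v := fun h => hvW (h ▸ hx)
      rw [tupleProd_cons, fF_eq_one_add_gG hwx, fF_eq_one_add_gG (Ne.symm hvw),
        gG_swap c w x]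
      linear_combination tupleProd (fF c) L x * gG_mul_gG (c := c) hwx hxv (Ne.symm hvw)
    calc (pickSum (w :: W) fun x L => gG c x v * tupleProd (fF c) L x)
        = gG c w v * tupleProd (fF c) W w + ((pickSum W fun x L =>
            fF c w v * (gG c x v * tupleProd (fF c) L x)
              - gG c w v * (gG c x w * tupleProd (fF c) L x))) := by
          rw [pickSum_cons, pickSum_congr hterm]
      _ = gG c w v * tupleProd (fF c) W w + (fF c w v * (tupleProd (fF c) W v - 1)
            - gG c w v * (tupleProd (fF c) W w - 1)) := by
          rw [← pickSum_gG_mul_fF (List.nodup_cons.mpr ⟨hvW, hW⟩),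
            ← pickSum_gG_mul_fF (List.nodup_cons.mpr ⟨hwW, hW⟩)]
          simp only [pickSum, Finset.mul_sum, Finset.sum_sub_distrib]
      _ = tupleProd (fF c) (w :: W) v - 1 := by
          rw [tupleProd_cons, fF_eq_one_add_gG (Ne.symm hvw)]
          ring

theorem pickSum_gG_mul_gG_mul_fF {u v : ℂ} {W : List ℂ} (hnd : (u :: v :: W).Nodup) :
    (pickSum W fun x L => gG c u x * gG c x v * tupleProd (fF c) L x)
      = gG c u v * (tupleProd (fF c) W v - tupleProd (fF c) W u) := by
  have hnd' := hnd
  simp only [List.nodup_cons, List.mem_cons, not_or] at hnd'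
  obtain ⟨⟨huv, huW⟩, hvW, hW⟩ := hnd'
  have hterm : ∀ x L, x :: L ~ W → gG c u x * gG c x v * tupleProd (fF c) L x
      = gG c u v * (gG c x v * tupleProd (fF c) L x)
        - gG c u v * (gG c x u * tupleProd (fF c) L x) := by
    intro x L hp
    have hx : x ∈ W := hp.subset List.mem_cons_self
    rw [gG_swap c u x]
    linear_combination tupleProd (fF c) L x *
      gG_mul_gG (c := c) (y := x) (by rintro rfl; exact huW hx) (by rintro rfl; exact hvW hx) huv
  have ev := pickSum_gG_mul_fF (c := c) hnd.of_cons
  have eu := pickSum_gG_mul_fF (c := c) (List.nodup_cons.mpr ⟨huW, hW⟩)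
  rw [pickSum_congr hterm]
  unfold pickSum at ev eu ⊢
  rw [Finset.sum_sub_distrib, ← Finset.mul_sum, ← Finset.mul_sum, ev, eu]
  ring

end PartialFractions

section DAction

variable {R : Type*} [Ring R] [Algebra ℂ R] {c : ℂ} {B D : ℂ → R}

noncomputable def dAction (c : ℂ) (B D : ℂ → R) (y : ℂ) (W : List ℂ) : R :=
  tupleProd (fF c) W y • (TTc c B W * D y) +
    pickSum W fun x L =>
      (gG c y x * tupleProd (gG c) L x * tupleProd (hH c) L y) • (TTc c B (y :: L) * D x)

theorem mul_dAction (hc : c ≠ 0) {y z : ℂ} {M : List ℂ} (hgen : Generic c (z :: y :: M)) :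
    B z * dAction c B D y M
      = (tupleProd (fF c) M y * tupleProd (hH c) M z) • (TTc c B (z :: M) * D y) +
        pickSum M fun x L =>
          (gG c y x * tupleProd (gG c) L x * tupleProd (hH c) L y * tupleProd (hH c) (y :: L) z)
            • (TTc c B (z :: y :: L) * D x) := by
  have hM := hgen.tupleProd_hH_ne_zero hc (List.subset_cons_self y M)
  rw [dAction, mul_add, mul_smul_comm, ← mul_assoc, mul_TTc hM, smul_mul_assoc, smul_smul]
  congr 1
  simp only [pickSum, Finset.mul_sum]
  refine Finset.sum_congr rfl fun k _ => ?_
  have hsub : y :: M.eraseIdx k ⊆ y :: M :=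
    List.cons_subset_cons y (List.eraseIdx_subset)
  rw [mul_smul_comm, ← mul_assoc, mul_TTc (hgen.tupleProd_hH_ne_zero hc hsub), smul_mul_assoc,
    smul_smul]

theorem hH_smul_dAction_cons (hc : c ≠ 0) (hBB : RelBB c B) {y w : ℂ} {W : List ℂ}
    (hgen : Generic c (y :: w :: W)) :
    tupleProd (hH c) W w • dAction c B D y (w :: W)
      = fF c w y • (B w * dAction c B D y W) + gG c y w • (B y * dAction c B D w W) := by
  have hgen' : Generic c (w :: y :: W) := hgen.perm (List.Perm.swap w y W)
  rw [mul_dAction hc hgen', mul_dAction hc hgen, dAction, pickSum_cons]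
  simp only [tupleProd_cons]
  have hsum : (tupleProd (hH c) W w • pickSum W fun x L =>
        (gG c y x * (gG c w x * tupleProd (gG c) L x) * (hH c w y * tupleProd (hH c) L y))
          • (TTc c B (y :: w :: L) * D x))
      = (fF c w y • pickSum W fun x L =>
        (gG c y x * tupleProd (gG c) L x * tupleProd (hH c) L y * (hH c y w * tupleProd (hH c) L w))
          • (TTc c B (w :: y :: L) * D x)) +
      (gG c y w • pickSum W fun x L =>
        (gG c w x * tupleProd (gG c) L x * tupleProd (hH c) L w * (hH c w y * tupleProd (hH c) L y))
          • (TTc c B (y :: w :: L) * D x)) := by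
    rw [pickSum_smul, pickSum_smul, pickSum_smul, ← pickSum_add]
    refine pickSum_congr fun x L hp => ?_
    have hg : Generic c (w :: y :: x :: L) := hgen'.perm ((hp.symm.cons y).cons w)
    rw [TTc_swap hc hBB (hg.sublist ((List.sublist_cons_self x L).cons_cons y |>.cons_cons w)),
      tupleProd_perm hp.symm, tupleProd_cons]
    have hwy := (hg.pair (x := y) (by simp)).1
    have hwx := (hg.pair (x := x) (by simp)).1
    have hyx := (hg.tail.pair (x := x) (by simp)).1
    rw [smul_smul, smul_smul, smul_smul, ← add_smul]
    congr 1
    linear_combination -tupleProd (gG c) L x * tupleProd (hH c) L y * tupleProd (hH c) L w *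
      fF_mul_hH_mul_gG_add hc hwy hyx hwx
  have hfW : tupleProd (fF c) W w = tupleProd (gG c) W w * tupleProd (hH c) W w :=
    tupleProd_fF hc fun x hx => (hgen.tail.pair hx).1.symm
  rw [hfW]
  linear_combination (norm := module) hsum

theorem D_mul_TTc (hc : c ≠ 0) (hBB : RelBB c B) (hDB : RelDB c B D) :
    ∀ {y : ℂ} {W : List ℂ}, Generic c (y :: W) → D y * TTc c B W = dAction c B D y W
  | y, [], _ => by simp [dAction]
  | y, w :: W, hgen => by
    have hyw : GenericPair c y w := hgen.pair List.mem_cons_self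
    have hgen' : Generic c (w :: y :: W) := hgen.perm (List.Perm.swap w y W)
    have hgw : Generic c (w :: W) := hgen.tail
    have hgy : Generic c (y :: W) := hgen'.sublist (List.sublist_cons_self w _)
    rw [TTc_cons, mul_smul_comm, ← mul_assoc, hDB hyw.1, add_mul, smul_mul_assoc,
      smul_mul_assoc, mul_assoc, mul_assoc, D_mul_TTc hc hBB hDB hgy, D_mul_TTc hc hBB hDB hgw,
      ← hH_smul_dAction_cons hc hBB hgen,
      inv_smul_smul₀ (hgw.tupleProd_hH_ne_zero hc (List.Subset.refl W))]

end DAction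

section Commutator

variable {R : Type*} [Ring R] [Algebra ℂ R] {c : ℂ} {A B C D : ℂ → R}

noncomputable def aCommutator (c : ℂ) (B C D : ℂ → R) (u : ℂ) (W : List ℂ) : R :=
  pickSum W fun x L =>
    (gG c u x * tupleProd (gG c) L x) • (C u * TTc c B L * D x - C x * TTc c B L * D u)

theorem B_mul_C_mul_TTc_mul (hBC : RelBC c B C) {v x t : ℂ} (hvx : v ≠ x)
    {M : List ℂ} (hx : tupleProd (hH c) M x ≠ 0) (hv : tupleProd (hH c) M v ≠ 0) :
    B v * (C x * TTc c B M * D t)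
      = (gG c x v * tupleProd (hH c) M x) • (C v * TTc c B (x :: M) * D t)
        - (fF c x v * tupleProd (hH c) M v) • (C x * TTc c B (v :: M) * D t) := by
  rw [← mul_assoc, ← mul_assoc, hBC hvx, sub_mul, sub_mul, smul_mul_assoc, smul_mul_assoc,
    smul_mul_assoc, smul_mul_assoc, mul_assoc (C v), mul_assoc (C x), mul_TTc hx, mul_TTc hv,
    mul_smul_comm, mul_smul_comm, smul_mul_assoc, smul_mul_assoc, smul_smul, smul_smul]

theorem B_mul_aCommutator (hc : c ≠ 0) (hBB : RelBB c B) (hBC : RelBC c B C) {u v : ℂ}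
    {W : List ℂ} (hgen : Generic c (u :: v :: W)) :
    B v * aCommutator c B C D u W
      = pickSum W fun x L => (gG c u x * tupleProd (gG c) L x) •
          ((gG c u v * tupleProd (hH c) L u) • (C v * TTc c B (u :: L) * D x)
            - (fF c u v * tupleProd (hH c) L v) • (C u * TTc c B (v :: L) * D x)
            - ((gG c x v * tupleProd (hH c) L x) • (C v * TTc c B W * D u)
              - (fF c x v * tupleProd (hH c) L v) • (C x * TTc c B (v :: L) * D u))) := by
  rw [aCommutator, mul_pickSum]
  refine pickSum_congr fun x L hp => ?_
  have hg : Generic c (u :: v :: x :: L) := hgen.perm ((hp.symm.cons v).cons u)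
  have hgv := hg.tail
  have hgx := hgv.tail
  have hu := hg.tupleProd_hH_ne_zero (L' := L) hc fun y hy => by simp [hy]
  have hv := hgv.tupleProd_hH_ne_zero hc (List.subset_cons_self x L)
  have hx := hgx.tupleProd_hH_ne_zero hc (List.Subset.refl L)
  have huv := (hg.pair (x := v) (by simp)).1
  have hvx := (hgv.pair (x := x) (by simp)).1
  rw [mul_smul_comm, mul_sub, B_mul_C_mul_TTc_mul hBC huv.symm hu hv,
    B_mul_C_mul_TTc_mul hBC hvx hx hv, TTc_perm hc hBB hp hgx]

theorem hH_smul_aCommutator_cons (hc : c ≠ 0) (hBB : RelBB c B) (hBC : RelBC c B C) {u v : ℂ}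
    {W : List ℂ} (hgen : Generic c (u :: v :: W)) :
    tupleProd (hH c) W v • aCommutator c B C D u (v :: W)
      = gG c u v • (C u * dAction c B D v W - C v * dAction c B D u W)
        + B v * aCommutator c B C D u W := by
  rw [B_mul_aCommutator hc hBB hBC hgen, aCommutator, pickSum_cons, dAction, dAction]
  simp only [tupleProd_cons, mul_add, mul_pickSum, mul_smul_comm, ← mul_assoc]
  have hsum : (tupleProd (hH c) W v • pickSum W fun x L =>
        (gG c u x * gG c v x * tupleProd (gG c) L x) •
          (C u * TTc c B (v :: L) * D x - C x * TTc c B (v :: L) * D u))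
      = (gG c u v • pickSum W fun x L =>
          (gG c v x * tupleProd (gG c) L x * tupleProd (hH c) L v) • (C u * TTc c B (v :: L) * D x))
        - (gG c u v • pickSum W fun x L =>
          (gG c u x * tupleProd (gG c) L x * tupleProd (hH c) L u) • (C v * TTc c B (u :: L) * D x))
        + (pickSum W fun x L => (gG c u x * tupleProd (gG c) L x) •
          ((gG c u v * tupleProd (hH c) L u) • (C v * TTc c B (u :: L) * D x)
            - (fF c u v * tupleProd (hH c) L v) • (C u * TTc c B (v :: L) * D x)
            - ((gG c x v * tupleProd (hH c) L x) • (C v * TTc c B W * D u)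
              - (fF c x v * tupleProd (hH c) L v) • (C x * TTc c B (v :: L) * D u))))
        + (pickSum W fun x L => gG c u x * gG c x v * tupleProd (fF c) L x)
          • (C v * TTc c B W * D u) := by
    rw [← pickSum_smul_const, pickSum_smul, pickSum_smul, pickSum_smul, ← pickSum_sub,
      ← pickSum_add, ← pickSum_add]
    refine pickSum_congr fun x L hp => ?_
    have hg : Generic c (u :: v :: x :: L) := hgen.perm ((hp.symm.cons v).cons u)
    have hux := (hg.pair (x := x) (by simp)).1
    have hvx := (hg.tail.pair (x := x) (by simp)).1
    have huv := (hg.pair (x := v) (by simp)).1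
    have hfx : fF c x v = -(hH c x v * gG c v x) := by
      rw [fF_eq_gG_mul_hH hc hvx.symm, gG_swap c v x]
      ring
    rw [tupleProd_perm hp.symm, tupleProd_cons, hfx,
      tupleProd_fF hc fun y hy => (hg.tail.tail.pair hy).1.symm]
    linear_combination (norm := module)
      (-(tupleProd (gG c) L x * tupleProd (hH c) L v) * gG_mul_gG_sub_gG_mul_fF huv hux hvx)
        • (C u * TTc c B (v :: L) * D x)
  have hfv : tupleProd (fF c) W v = tupleProd (gG c) W v * tupleProd (hH c) W v :=
    tupleProd_fF hc fun x hx => (hgen.tail.pair hx).1.symm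
  rw [pickSum_gG_mul_gG_mul_fF hgen.nodup, hfv] at hsum
  rw [hfv]
  linear_combination (norm := module) hsum

theorem A_mul_TTc_sub_TTc_mul_A (hc : c ≠ 0) (hBB : RelBB c B) (hDB : RelDB c B D)
    (hAB : RelAB c A B C D) (hBC : RelBC c B C) :
    ∀ {u : ℂ} {W : List ℂ}, Generic c (u :: W) →
      A u * TTc c B W - TTc c B W * A u = aCommutator c B C D u W
  | _, [], _ => by simp [aCommutator]
  | u, v :: W, hgen => by
    have huv : u ≠ v := (hgen.pair List.mem_cons_self).1
    have hgv : Generic c (v :: W) := hgen.tail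
    have hgu : Generic c (u :: W) := hgen.sublist ((List.sublist_cons_self v W).cons_cons u)
    have hexpand : A u * (B v * TTc c B W) - B v * TTc c B W * A u
        = gG c u v • (C u * (D v * TTc c B W) - C v * (D u * TTc c B W))
          + B v * (A u * TTc c B W - TTc c B W * A u) := by
      rw [← mul_assoc, hAB huv]
      simp only [add_mul, sub_mul, mul_sub, smul_mul_assoc, smul_sub, mul_assoc]
      abel
    rw [D_mul_TTc hc hBB hDB hgv, D_mul_TTc hc hBB hDB hgu, A_mul_TTc_sub_TTc_mul_A hc hBB hDB hAB
      hBC hgu, ← hH_smul_aCommutator_cons hc hBB hBC hgen] at hexpand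
    rw [TTc_cons, mul_smul_comm, smul_mul_assoc, ← smul_sub, hexpand,
      inv_smul_smul₀ (hgv.tupleProd_hH_ne_zero hc (List.Subset.refl W))]

end Commutator

theorem sort_univ_erase (n : ℕ) (k : Fin n) :
    (Finset.univ.erase k).sort (· ≤ ·) = (List.finRange n).eraseIdx k := by
  refine List.Perm.eq_of_pairwise' (Finset.pairwise_sort _ _)
    ((List.pairwise_lt_finRange n).sublist (List.eraseIdx_sublist _ _) |>.imp le_of_lt) ?_
  rw [List.perm_ext_iff_of_nodup (Finset.sort_nodup _ _)
    ((List.nodup_finRange n).sublist (List.eraseIdx_sublist _ _))]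
  intro a
  rw [Finset.mem_sort, Finset.mem_erase, List.mem_eraseIdx_iff_getElem]
  constructor
  · rintro ⟨hne, -⟩
    exact ⟨a, by simp, by simpa [Fin.val_eq_val] using hne, by simp⟩
  · rintro ⟨i, h, hne, rfl⟩
    exact ⟨fun hh => hne (by simpa using congrArg Fin.val hh), Finset.mem_univ _⟩

theorem subL_univ_erase (V : List ℂ) (k : Fin V.length) :
    subL V (Finset.univ.erase k) = V.eraseIdx k := by
  rw [subL, sort_univ_erase, ← List.eraseIdx_map, List.map_get_finRange]

end GL21

theorem stmt18_general {R : Type*} [Ring R] [Algebra ℂ R] (c : ℂ) (hc : c ≠ 0)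
    (T : Fin 3 → Fin 3 → ℂ → R) (hT : RTTrel c T)
    (u : ℂ) (V : List ℂ)
    (hgen : Generic c (u :: V)) :
    T 0 1 u * TTc c (T 1 2) V - TTc c (T 1 2) V * T 0 1 u
      = ∑ k : Fin V.length,
          (gG c u (V.get k) * pF (gG c) (subL V (Finset.univ.erase k)) [V.get k]) •
          (T 0 2 u * TTc c (T 1 2) (subL V (Finset.univ.erase k)) * T 1 1 (V.get k)
            - T 0 2 (V.get k) * TTc c (T 1 2) (subL V (Finset.univ.erase k)) * T 1 1 u) := by
  rw [GL21.A_mul_TTc_sub_TTc_mul_A hc (hT.relBB hc) hT.relDB hT.relAB hT.relBC hgen]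
  simp only [GL21.aCommutator, GL21.pickSum, GL21.subL_univ_erase, GL21.pF_singleton]

/-- eq. (6.1)/(6.14):
`[T_{12}(u), 𝕋_{23}(v̄)] = Σ_k g(u,v_k)·g(v̄_k,v_k)·(T_{13}(u)·𝕋_{23}(v̄_k)·T_{22}(v_k)
− T_{13}(v_k)·𝕋_{23}(v̄_k)·T_{22}(u))`, where `v̄_k = v̄ ∖ {v_k}`.
(Indices `0,1,2 : Fin 3` encode the matrix indices `1,2,3`.) -/
theorem stmt18 {R : Type*} [Ring R] [Algebra ℂ R] (c : ℂ) (hc : c ≠ 0)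
    (T : Fin 3 → Fin 3 → ℂ → R) (hT : RTTrel c T)
    (b : ℕ) (u : ℂ) (V : List ℂ) (hV : V.length = b)
    (hgen : Generic c (u :: V)) :
    T 0 1 u * TTc c (T 1 2) V - TTc c (T 1 2) V * T 0 1 u
      = ∑ k : Fin V.length,
          (gG c u (V.get k) * pF (gG c) (subL V (Finset.univ.erase k)) [V.get k]) •
          (T 0 2 u * TTc c (T 1 2) (subL V (Finset.univ.erase k)) * T 1 1 (V.get k)
            - T 0 2 (V.get k) * TTc c (T 1 2) (subL V (Finset.univ.erase k)) * T 1 1 u) :=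
  stmt18_general c hc T hT u V hgen
end
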